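/- arXiv:0802.2468 — 11 statements merged into one kernel-verified Lean document; each statement's English description precedes it below -/
import Mathlib

section
/- Let E be a finite nonempty subset of the unit circle ∂U, let α, β ≥ 0, and let γ > max(1 + α, α + β). Then the integral ∫_{1/γ}^1 ∫₀^{2π} (rγ − 1)(1−r)^{γ−2} / ((1 − r)^α · dist(r·e^{iθ}, E)^β) dθ dr is finite. -/
/-!
For `z = r e^{iθ}` and `e ∈ E`, `|z - e|` dominates both `1 - r` and `|e^{iθ} - e| / 2`, hence
also `∠(e^{iθ}, e) / π`. Interpolating, `dist(z, E)^β ≥ (1 - r)^(β - p) (∠ / π)^p` for any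
`p ∈ [0, β]`; taking moreover `p < 1` and `p > 1 + α + β - γ` bounds the integrand by
`(1 - r)^q` with `q > -1`, integrable in `r`, times `∑_{e ∈ E} ∠(e^{iθ}, e)^(-p)`, integrable
in `θ` because the arc-length singularity has exponent `p < 1`.
-/

open MeasureTheory Set Metric ENNReal
open Real InnerProductGeometry

theorem max_one_sub_norm_sub_div_two_le {V : Type*} [NormedAddCommGroup V] [NormedSpace ℝ V]
    {w e : V} (hw : ‖w‖ = 1) (he : ‖e‖ = 1) {r : ℝ} (hr0 : 0 ≤ r) (hr1 : r ≤ 1) :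
    max (1 - r) (‖w - e‖ / 2) ≤ ‖r • w - e‖ := by
  have h_radial : 1 - r ≤ ‖r • w - e‖ := by
    simpa [norm_smul, hw, he, abs_of_nonneg hr0, norm_sub_rev] using norm_sub_norm_le e (r • w)
  have h_chord : ‖w - e‖ ≤ (1 - r) + ‖r • w - e‖ := by
    calc ‖w - e‖ ≤ ‖w - r • w‖ + ‖r • w - e‖ := norm_sub_le_norm_sub_add_norm_sub _ _ _
      _ = (1 - r) + ‖r • w - e‖ := by
        rw [← one_smul ℝ w, smul_smul, mul_one, ← sub_smul, norm_smul, hw, mul_one,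
          Real.norm_of_nonneg (by linarith)]
  exact max_le h_radial (by linarith)

theorem Real.rpow_sub_mul_rpow_le_rpow {a b c p s : ℝ} (ha : 0 ≤ a) (hb : 0 ≤ b)
    (hac : a ≤ c) (hbc : b ≤ c) (hp : 0 ≤ p) (hps : p ≤ s) :
    a ^ (s - p) * b ^ p ≤ c ^ s :=
  calc a ^ (s - p) * b ^ p ≤ c ^ (s - p) * c ^ p := by
        gcongr; exact rpow_nonneg (ha.trans hac) _
    _ = c ^ s := by
      rw [← rpow_add_of_nonneg (ha.trans hac) (sub_nonneg.2 hps) hp, sub_add_cancel]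

theorem exists_mem_rpow_le_infDist_rpow {E : Set ℂ} (hE : E ⊆ sphere 0 1) (hEfin : E.Finite)
    (hEne : E.Nonempty) {r : ℝ} (hr0 : 0 ≤ r) (hr1 : r ≤ 1) {p β : ℝ} (hp : 0 ≤ p) (hpβ : p ≤ β)
    (θ : ℝ) :
    ∃ e ∈ E, (1 - r) ^ (β - p) * (angle (Complex.exp (θ * Complex.I)) e / π) ^ p ≤
      infDist (r * Complex.exp (θ * Complex.I)) E ^ β := by
  set w := Complex.exp (θ * Complex.I)
  have hw : ‖w‖ = 1 := Complex.norm_exp_ofReal_mul_I θ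
  obtain ⟨e, heE, hdist⟩ := hEfin.isCompact.exists_infDist_eq_dist hEne (r * w)
  have he : ‖e‖ = 1 := by simpa using hE heE
  have hmax := max_one_sub_norm_sub_div_two_le hw he hr0 hr1
  rw [hdist, dist_eq_norm, ← Complex.real_smul]
  refine ⟨e, heE, Real.rpow_sub_mul_rpow_le_rpow (by linarith)
    (div_nonneg (angle_nonneg _ _) pi_pos.le)
    (le_of_max_le_left hmax) ?_ hp hpβ⟩
  calc angle w e / π = 2 / π * angle w e / 2 := by ring
    _ ≤ ‖w - e‖ / 2 := by gcongr; exact Complex.mul_angle_le_norm_sub hw he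
    _ ≤ _ := le_of_max_le_right hmax

theorem mul_rpow_div_le_of_rpow_mul_rpow_le {δ t γ α β p A D : ℝ} (hδ : 0 < δ) (ht : 0 ≤ t)
    (htγ : t ≤ γ) (hA : 0 < A) (hD : δ ^ (β - p) * (A / π) ^ p ≤ D ^ β) :
    t * δ ^ (γ - 2) / (δ ^ α * D ^ β) ≤ γ * π ^ p * δ ^ (γ - 2 - α - β + p) * A ^ (-p) := by
  have hγ : 0 ≤ γ := ht.trans htγ
  calc t * δ ^ (γ - 2) / (δ ^ α * D ^ β)
      ≤ γ * δ ^ (γ - 2) / (δ ^ α * (δ ^ (β - p) * (A / π) ^ p)) := by gcongr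
    _ = γ * π ^ p * δ ^ (γ - 2 - α - β + p) * A ^ (-p) := by
      rw [show γ - 2 - α - β + p = γ - 2 - (α + (β - p)) by ring,
        rpow_sub hδ (γ - 2) (α + (β - p)), rpow_add hδ, div_rpow hA.le pi_pos.le,
        rpow_neg hA.le]
      field_simp

theorem div_infDist_rpow_le_sum_angle_rpow_neg {E : Set ℂ} (hE : E ⊆ sphere 0 1) (hEfin : E.Finite)
    (hEne : E.Nonempty) {α β γ p : ℝ} (hγ : 0 < γ) (hp : 0 ≤ p) (hpβ : p ≤ β)
    {r : ℝ} (hr : r ∈ Ioo (1 / γ) 1) {θ : ℝ} (hθ : Complex.exp (θ * Complex.I) ∉ E) :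
    (r * γ - 1) * (1 - r) ^ (γ - 2) /
        ((1 - r) ^ α * infDist (r * Complex.exp (θ * Complex.I)) E ^ β) ≤
      γ * π ^ p * (1 - r) ^ (γ - 2 - α - β + p) *
        ∑ e ∈ hEfin.toFinset, angle (Complex.exp (θ * Complex.I)) e ^ (-p) := by
  have hrγ : 1 < r * γ := (div_lt_iff₀ hγ).1 hr.1
  have hr0 : 0 ≤ r := (one_div_pos.2 hγ).le.trans hr.1.le
  obtain ⟨e, heE, hD⟩ := exists_mem_rpow_le_infDist_rpow hE hEfin hEne hr0 hr.2.le hp hpβ θ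
  have hA : 0 < angle (Complex.exp (θ * Complex.I)) e := by
    refine lt_of_lt_of_le (norm_pos_iff.2 (sub_ne_zero.2 ?_))
      (Complex.norm_sub_le_angle (Complex.norm_exp_ofReal_mul_I θ) (by simpa using hE heE))
    rintro h
    exact hθ (h ▸ heE)
  refine (mul_rpow_div_le_of_rpow_mul_rpow_le (sub_pos.2 hr.2) (by linarith)
    (by nlinarith [hr.2]) hA hD).trans ?_
  gcongr
  · exact mul_nonneg (by positivity) (rpow_nonneg (sub_pos.2 hr.2).le _)
  · exact Finset.single_le_sum (f := fun e => angle (Complex.exp (θ * Complex.I)) e ^ (-p))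
      (fun e _ => rpow_nonneg (angle_nonneg _ _) _) (hEfin.mem_toFinset.2 heE)

theorem countable_setOf_exp_mul_I_mem {S : Set ℂ} (hS : S.Countable) :
    {θ : ℝ | Complex.exp (θ * Complex.I) ∈ S}.Countable := by
  rw [show {θ : ℝ | Complex.exp (θ * Complex.I) ∈ S} =
      ⋃ e ∈ S, {θ : ℝ | Complex.exp (θ * Complex.I) = e} by ext; simp]
  refine hS.biUnion fun e _ => ?_
  rcases eq_empty_or_nonempty {θ : ℝ | Complex.exp (θ * Complex.I) = e} with h | ⟨θ₀, hθ₀⟩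
  · simp [h]
  refine (countable_range fun m : ℤ => θ₀ + m * (2 * π)).mono fun θ hθ => ?_
  obtain ⟨m, hm⟩ := Circle.exp_eq_exp.1 (Subtype.ext (by simp_all [Circle.coe_exp]) :
    Circle.exp θ = Circle.exp θ₀)
  exact ⟨m, hm.symm⟩

theorem intervalIntegrable_abs_toIocMod_rpow_neg {p : ℝ} (hp : p < 1) (φ a b : ℝ) :
    IntervalIntegrable (fun θ => |toIocMod two_pi_pos (-π) (θ - φ)| ^ (-p)) volume a b := by
  have hloc : LocallyIntegrable (fun x : ℝ => |x| ^ (-p)) :=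
    locallyIntegrable_of_norm_le_rpow (C := 1) (α := p) (by simp) (by simpa using hp)
      (ae_of_all _ fun x => by simp [abs_rpow_of_nonneg (abs_nonneg x)])
      (by fun_prop : Measurable fun x : ℝ => |x| ^ (-p)).aestronglyMeasurable
  have hperiodic : Function.Periodic
      (fun θ => |toIocMod two_pi_pos (-π) (θ - φ)| ^ (-p)) (2 * π) :=
    ((toIocMod_periodic two_pi_pos (-π)).sub_const φ).comp fun x => |x| ^ (-p)
  refine hperiodic.intervalIntegrable two_pi_pos.ne' (t := φ - π) ?_ a b
  have hperiod : IntervalIntegrable (fun θ => |θ - φ| ^ (-p)) volume (φ - π) (φ + π) := by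
    have := (hloc.integrableOn_isCompact (isCompact_uIcc (a := -π) (b := π))).intervalIntegrable
    simpa [add_comm, sub_eq_add_neg] using this.comp_sub_right φ
  rw [show φ - π + 2 * π = φ + π by ring]
  refine hperiod.congr_ae ((ae_restrict_mem measurableSet_uIoc).mono fun θ hθ => ?_)
  rw [uIoc_of_le (by linarith [pi_pos])] at hθ
  simp only [(toIocMod_eq_self two_pi_pos).2 (show θ - φ ∈ Ioc (-π) (-π + 2 * π) by
    constructor <;> linarith [hθ.1, hθ.2])]

theorem intervalIntegrable_angle_exp_mul_I_rpow_neg {p : ℝ} (hp : p < 1) {e : ℂ} (he : ‖e‖ = 1)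
    (a b : ℝ) :
    IntervalIntegrable (fun θ : ℝ => angle (Complex.exp (θ * Complex.I)) e ^ (-p)) volume a b := by
  obtain ⟨φ, -, rfl⟩ := Complex.norm_eq_one_iff'.1 he
  simpa only [Complex.angle_exp_exp] using intervalIntegrable_abs_toIocMod_rpow_neg hp φ a b

theorem intervalIntegrable_one_sub_rpow {q : ℝ} (hq : -1 < q) (a b : ℝ) :
    IntervalIntegrable (fun r => (1 - r) ^ q) volume a b := by
  simpa using
    (intervalIntegral.intervalIntegrable_rpow' hq (a := 1 - a) (b := 1 - b)).comp_sub_left 1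

theorem exists_nonneg_le_lt_one_gt {β c : ℝ} (hβ : 0 ≤ β) (hcβ : c < β) (hc₁ : c < 1) :
    ∃ p, 0 ≤ p ∧ p ≤ β ∧ p < 1 ∧ c < p := by
  have hc := lt_min hcβ hc₁
  have := min_le_left β 1
  have := min_le_right β 1
  have := le_max_right 0 ((c + min β 1) / 2)
  exact ⟨max 0 ((c + min β 1) / 2), le_max_left _ _, max_le hβ (by linarith),
    max_lt one_pos (by linarith), by linarith⟩

/-- Finiteness of the constant `C_γ(m)` for `m ∈ M(E,α,β)` and
`γ > max(1+α, α+β)`. -/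
theorem stmt_3 (E : Set ℂ) (hE : E ⊆ sphere (0:ℂ) 1) (hEfin : E.Finite)
    (hEne : E.Nonempty) (α β : ℝ) (hα : 0 ≤ α) (hβ : 0 ≤ β)
    (γ : ℝ) (hγ : max (1 + α) (α + β) < γ) :
    (∫⁻ r in Ioo (1/γ) 1, ∫⁻ θ in Ioo (0:ℝ) (2 * Real.pi),
        ENNReal.ofReal ((r * γ - 1) * (1 - r) ^ (γ - 2) /
          ((1 - r) ^ α *
            (Metric.infDist ((r : ℂ) * Complex.exp ((θ : ℂ) * Complex.I)) E) ^ β))) < ⊤ := by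
  have hγ₁ : 1 + α < γ := (le_max_left _ _).trans_lt hγ
  have hγ₂ : α + β < γ := (le_max_right _ _).trans_lt hγ
  have hγ₀ : 0 < γ := by linarith
  obtain ⟨p, hp, hpβ, hp₁, hpq⟩ :=
    exists_nonneg_le_lt_one_gt hβ (show 1 + α + β - γ < β by linarith) (by linarith)
  set g : ℝ → ℝ := fun r => γ * π ^ p * (1 - r) ^ (γ - 2 - α - β + p)
  set W : ℝ → ℝ := fun θ => ∑ e ∈ hEfin.toFinset, angle (Complex.exp (θ * Complex.I)) e ^ (-p)
  have hg : IntegrableOn g (Ioo (1 / γ) 1) :=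
    ((intervalIntegrable_iff_integrableOn_Ioo_of_le ((div_lt_one hγ₀).2 (by linarith)).le).1
      (intervalIntegrable_one_sub_rpow (by linarith) _ _)).const_mul _
  have hW : IntegrableOn W (Ioo 0 (2 * π)) :=
    (intervalIntegrable_iff_integrableOn_Ioo_of_le two_pi_pos.le).1 <| by
      simpa only [Finset.sum_fn] using IntervalIntegrable.sum _ fun e he =>
        intervalIntegrable_angle_exp_mul_I_rpow_neg hp₁
          (by simpa using hE (hEfin.mem_toFinset.1 he)) 0 (2 * π)
  calc _ ≤ ∫⁻ r in Ioo (1 / γ) 1, ∫⁻ θ in Ioo 0 (2 * π),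
          ENNReal.ofReal (g r) * ENNReal.ofReal (W θ) := by
        refine setLIntegral_mono' measurableSet_Ioo fun r hr =>
          lintegral_mono_ae (ae_restrict_of_ae ?_)
        -- off the countable set `{θ | e^{iθ} ∈ E}` no angle vanishes; there `0 ^ (-p) = 0` in `ℝ`
        filter_upwards [(countable_setOf_exp_mul_I_mem hEfin.countable).ae_notMem volume]
          with θ hθ
        rw [← ofReal_mul (mul_nonneg (by positivity) (rpow_nonneg (sub_pos.2 hr.2).le _))]
        exact ofReal_le_ofReal <|
          div_infDist_rpow_le_sum_angle_rpow_neg hE hEfin hEne hγ₀ hp hpβ hr hθ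
    _ = (∫⁻ r in Ioo (1 / γ) 1, ENNReal.ofReal (g r)) *
          ∫⁻ θ in Ioo 0 (2 * π), ENNReal.ofReal (W θ) :=
        lintegral_lintegral_mul hg.aemeasurable.ennreal_ofReal hW.aemeasurable.ennreal_ofReal
    _ < ⊤ := mul_lt_top hg.setLIntegral_lt_top hW.setLIntegral_lt_top
end

section
/- For every z in the open unit disk U with z ≠ 0, setting w(z) = (z + z⁻¹)/2, one has (1/4)·|z² − 1|·(1 − |z|)/|z| ≤ dist(w(z), [−1,1]) ≤ ((1 + √2)/4)·|z² − 1|·(1 − |z|)/|z|. -/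
/-!
Write `r = ‖z‖`, `w = (z + z⁻¹)/2`, so that `Re w = Re z (1 + r²)/(2r²)`, `Im w = -Im z (1 - r²)/(2r²)`
and `‖z² - 1‖² = (1 - r²)² + 4 (Im z)²`.

Lower bound: if `Re w ≥ 1` the nearest point of `[-1, 1]` is `1`, and `w - 1 = (z - 1)²/(2z)`
together with `1 - r ≤ ‖z - 1‖`, `‖z + 1‖ ≤ 2` gives the estimate; `Re w ≤ -1` is the same under
`z ↦ -z`. If `|Re w| ≤ 1`, the distance is at least `|Im w|`, and `|Re w| ≤ 1` keeps `Im z` away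
from zero enough to bound `‖z² - 1‖` by a multiple of `|Im w|`.

Upper bound: compare `w` with `Re z / r ∈ [-1, 1]`. After scaling, the squared distance and
`‖z² - 1‖²` are weighted sums of `(Re z)²` and `(Im z)²`, with the termwise comparisons
`2 (1 - r) ≤ (1 + √2)(1 - r²)` and `2 (1 + r) ≤ (1 + √2)(1 + r²)`.
-/

open Metric Set

noncomputable def joukowski (z : ℂ) : ℂ := (z + z⁻¹) / 2

section Joukowski

variable {z : ℂ}

lemma joukowski_re (hz : z ≠ 0) :
    (joukowski z).re = z.re * (1 + ‖z‖ ^ 2) / (2 * ‖z‖ ^ 2) := by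
  have : ‖z‖ ≠ 0 := norm_ne_zero_iff.mpr hz
  simp only [joukowski, Complex.div_ofNat_re, Complex.add_re, Complex.inv_re,
    Complex.normSq_eq_norm_sq]
  field_simp
  ring

lemma joukowski_im (hz : z ≠ 0) :
    (joukowski z).im = -(z.im * (1 - ‖z‖ ^ 2) / (2 * ‖z‖ ^ 2)) := by
  have : ‖z‖ ≠ 0 := norm_ne_zero_iff.mpr hz
  simp only [joukowski, Complex.div_ofNat_im, Complex.add_im, Complex.inv_im,
    Complex.normSq_eq_norm_sq]
  field_simp
  ring

lemma joukowski_sub_one (hz : z ≠ 0) : joukowski z - 1 = (z - 1) ^ 2 / (2 * z) := by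
  unfold joukowski
  field_simp
  ring

lemma joukowski_neg (z : ℂ) : joukowski (-z) = -joukowski z := by
  unfold joukowski
  rw [inv_neg]
  ring

end Joukowski

lemma sq_norm_sq_sub_one (z : ℂ) : ‖z ^ 2 - 1‖ ^ 2 = (1 - ‖z‖ ^ 2) ^ 2 + 4 * z.im ^ 2 := by
  rw [Complex.sq_norm, Complex.normSq_apply, Complex.sq_norm, Complex.normSq_apply]
  simp only [pow_two, Complex.sub_re, Complex.sub_im, Complex.mul_re, Complex.mul_im,
    Complex.one_re, Complex.one_im]
  ring

lemma Complex.norm_sub_one_le_norm_sub_ofReal {w : ℂ} {t : ℝ} (hw : 1 ≤ w.re) (ht : t ≤ 1) :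
    ‖w - 1‖ ≤ ‖w - t‖ := by
  rw [Complex.norm_eq_sqrt_sq_add_sq, Complex.norm_eq_sqrt_sq_add_sq]
  refine Real.sqrt_le_sqrt ?_
  simp only [Complex.sub_re, Complex.sub_im, Complex.one_re, Complex.one_im,
    Complex.ofReal_re, Complex.ofReal_im]
  nlinarith

-- Equality at `r = √2 - 1`: this is what forces the constant `1 + √2`.
lemma two_mul_one_add_le (r : ℝ) : 2 * (1 + r) ≤ (1 + √2) * (1 + r ^ 2) := by
  have hs : √2 ^ 2 = 2 := Real.sq_sqrt zero_le_two
  have h : (1 + √2) * (1 + r ^ 2) - 2 * (1 + r) = (1 + √2) * (r - (√2 - 1)) ^ 2 := by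
    linear_combination (2 * r + 1 - √2) * hs
  rw [← sub_nonneg, h]
  positivity

lemma two_mul_one_sub_le {r : ℝ} (hr0 : 0 ≤ r) (hr1 : r ≤ 1) :
    2 * (1 - r) ≤ (1 + √2) * (1 - r ^ 2) := by
  have hs : 1 ≤ √2 := Real.one_le_sqrt.mpr one_le_two
  nlinarith [mul_nonneg (sub_nonneg.2 hr1) hr0, mul_nonneg (sub_nonneg.2 hr1) (sub_nonneg.2 hs)]

section Estimates

variable {z : ℂ}

lemma quarter_mul_le_norm_joukowski_sub_one (hz0 : z ≠ 0) (hz : ‖z‖ ≤ 1) :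
    (1 / 4) * (‖z ^ 2 - 1‖ * (1 - ‖z‖) / ‖z‖) ≤ ‖joukowski z - 1‖ := by
  have hr : 0 < ‖z‖ := norm_pos_iff.mpr hz0
  have h_add : ‖z + 1‖ ≤ 2 := by
    have := norm_add_le z 1
    rw [norm_one] at this
    linarith
  have h_sub : 1 - ‖z‖ ≤ ‖z - 1‖ := by
    simpa [norm_sub_rev] using norm_sub_norm_le (1 : ℂ) z
  have h_fact : z ^ 2 - 1 = (z - 1) * (z + 1) := by ring
  rw [joukowski_sub_one hz0, h_fact, norm_div, norm_mul, norm_pow, norm_mul, Complex.norm_two]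
  calc (1 / 4) * (‖z - 1‖ * ‖z + 1‖ * (1 - ‖z‖) / ‖z‖)
      ≤ (1 / 4) * (‖z - 1‖ * 2 * ‖z - 1‖ / ‖z‖) := by gcongr
    _ = ‖z - 1‖ ^ 2 / (2 * ‖z‖) := by field_simp; ring

lemma quarter_mul_le_abs_joukowski_im (hz0 : z ≠ 0) (hz : ‖z‖ ≤ 1)
    (hre : |(joukowski z).re| ≤ 1) :
    (1 / 4) * (‖z ^ 2 - 1‖ * (1 - ‖z‖) / ‖z‖) ≤ |(joukowski z).im| := by
  set r := ‖z‖
  have hr : 0 < r := norm_pos_iff.mpr hz0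
  have hxy : z.re ^ 2 + z.im ^ 2 = r ^ 2 := by
    rw [Complex.sq_norm, Complex.normSq_apply]; ring
  have hx : z.re ^ 2 * (1 + r ^ 2) ^ 2 ≤ 4 * r ^ 4 := by
    rw [joukowski_re hz0, abs_le, div_le_one (by positivity), le_div_iff₀ (by positivity)] at hre
    nlinarith
  have hy : r ^ 2 * (1 - r ^ 2) ^ 2 ≤ z.im ^ 2 * (1 + r ^ 2) ^ 2 := by nlinarith
  have hy' : r ^ 2 * (1 - r ^ 2) ^ 2 ≤ 4 * z.im ^ 2 * (1 + 2 * r) := by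
    have h4 : (1 + r ^ 2) ^ 2 ≤ 4 * (1 + 2 * r) := by
      have : r ^ 2 ≤ 1 := by nlinarith
      nlinarith
    nlinarith [mul_le_mul_of_nonneg_left h4 (sq_nonneg z.im)]
  have h1r : 0 ≤ 1 - r := by linarith
  rw [joukowski_im hz0, abs_neg, ← sq_le_sq₀ (by positivity) (abs_nonneg _), sq_abs]
  calc ((1 / 4) * (‖z ^ 2 - 1‖ * (1 - r) / r)) ^ 2
      = (1 - r) ^ 2 * (r ^ 2 * ((1 - r ^ 2) ^ 2 + 4 * z.im ^ 2)) / (16 * r ^ 4) := by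
        rw [← sq_norm_sq_sub_one]; field_simp; ring
    _ ≤ (1 - r) ^ 2 * (4 * z.im ^ 2 * (1 + r) ^ 2) / (16 * r ^ 4) := by
        gcongr (1 - r) ^ 2 * ?_ / _; nlinarith
    _ = (z.im * (1 - r ^ 2) / (2 * r ^ 2)) ^ 2 := by field_simp; ring

lemma quarter_mul_le_norm_joukowski_sub_ofReal (hz0 : z ≠ 0) (hz : ‖z‖ ≤ 1) {t : ℝ}
    (ht : t ∈ Icc (-1) 1) :
    (1 / 4) * (‖z ^ 2 - 1‖ * (1 - ‖z‖) / ‖z‖) ≤ ‖joukowski z - t‖ := by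
  rcases le_or_gt 1 (joukowski z).re with h_right | h_lt
  · exact (quarter_mul_le_norm_joukowski_sub_one hz0 hz).trans
      (Complex.norm_sub_one_le_norm_sub_ofReal h_right ht.2)
  rcases le_or_gt (joukowski z).re (-1) with h_left | h_gt
  · have h := quarter_mul_le_norm_joukowski_sub_one (neg_ne_zero.2 hz0) (by rwa [norm_neg])
    rw [joukowski_neg, neg_sq, norm_neg] at h
    have h_neg : ‖-joukowski z - 1‖ ≤ ‖-joukowski z - ((-t : ℝ) : ℂ)‖ :=
      Complex.norm_sub_one_le_norm_sub_ofReal (by simp; linarith) (by linarith [ht.1])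
    rw [Complex.ofReal_neg, neg_sub_neg, norm_sub_rev (t : ℂ)] at h_neg
    exact h.trans h_neg
  · refine (quarter_mul_le_abs_joukowski_im hz0 hz (abs_le.2 ⟨h_gt.le, h_lt.le⟩)).trans ?_
    simpa using Complex.abs_im_le_norm (joukowski z - t)

lemma norm_joukowski_sub_re_div_norm_le (hz0 : z ≠ 0) (hz : ‖z‖ ≤ 1) :
    ‖joukowski z - ((z.re / ‖z‖ : ℝ) : ℂ)‖ ≤
      ((1 + √2) / 4) * (‖z ^ 2 - 1‖ * (1 - ‖z‖) / ‖z‖) := by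
  set r := ‖z‖
  have hr : 0 < r := norm_pos_iff.mpr hz0
  have hxy : z.re ^ 2 + z.im ^ 2 = r ^ 2 := by
    rw [Complex.sq_norm, Complex.normSq_apply]; ring
  have hN : r ^ 2 * ‖z ^ 2 - 1‖ ^ 2 =
      (1 - r ^ 2) ^ 2 * z.re ^ 2 + (1 + r ^ 2) ^ 2 * z.im ^ 2 := by
    rw [sq_norm_sq_sub_one]; linear_combination -(1 - r ^ 2) ^ 2 * hxy
  have h1r : 0 ≤ 1 - r := by linarith
  have h_sub := two_mul_one_sub_le hr.le hz
  have h_add := two_mul_one_add_le r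
  rw [← sq_le_sq₀ (norm_nonneg _) (by positivity), Complex.sq_norm, Complex.normSq_apply,
    Complex.sub_re, Complex.sub_im, Complex.ofReal_re, Complex.ofReal_im, joukowski_re hz0,
    joukowski_im hz0]
  calc _ = (1 - r) ^ 2 * (z.re ^ 2 * (2 * (1 - r)) ^ 2 + z.im ^ 2 * (2 * (1 + r)) ^ 2)
        / (16 * r ^ 4) := by field_simp; ring
    _ ≤ (1 - r) ^ 2 * (z.re ^ 2 * ((1 + √2) * (1 - r ^ 2)) ^ 2
          + z.im ^ 2 * ((1 + √2) * (1 + r ^ 2)) ^ 2) / (16 * r ^ 4) := by gcongr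
    _ = (1 + √2) ^ 2 * (1 - r) ^ 2 * (r ^ 2 * ‖z ^ 2 - 1‖ ^ 2) / (16 * r ^ 4) := by
        rw [hN]; ring
    _ = _ := by field_simp; ring

end Estimates

/-- Lemma 4.2 (Lemma `lem:ko1`): two-sided estimate for the distance from
`w(z) = (z + z⁻¹)/2` to the segment `[-1,1]`. -/
theorem stmt_5 (z : ℂ) (hz : z ∈ ball (0:ℂ) 1) (hz0 : z ≠ 0) :
    (1/4) * (‖z^2 - 1‖ * (1 - ‖z‖) / ‖z‖) ≤
      Metric.infDist ((z + z⁻¹) / 2) (Complex.ofReal '' Icc (-1:ℝ) 1) ∧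
    Metric.infDist ((z + z⁻¹) / 2) (Complex.ofReal '' Icc (-1:ℝ) 1) ≤
      ((1 + Real.sqrt 2) / 4) * (‖z^2 - 1‖ * (1 - ‖z‖) / ‖z‖) := by
  have hz1 : ‖z‖ ≤ 1 := (mem_ball_zero_iff.mp hz).le
  change _ ≤ infDist (joukowski z) _ ∧ infDist (joukowski z) _ ≤ _
  have h_ne : (Complex.ofReal '' Icc (-1:ℝ) 1).Nonempty := ⟨0, 0, by norm_num, rfl⟩
  refine ⟨(le_infDist h_ne).2 ?_, (infDist_le_dist_of_mem (y := ((z.re / ‖z‖ : ℝ) : ℂ)) ?_).trans ?_⟩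
  · rintro _ ⟨t, ht, rfl⟩
    rw [dist_eq_norm]
    exact quarter_mul_le_norm_joukowski_sub_ofReal hz0 hz1 ht
  · exact ⟨_, abs_le.mp (Complex.abs_re_div_norm_le_one z), rfl⟩
  · rw [dist_eq_norm]
    exact norm_joukowski_sub_re_div_norm_le hz0 hz1
end

section
/- For every z in the open unit disk U with z ≠ 0 such that Re((z + z⁻¹)/2) ≤ −1, one has (1/4)·|z² − 1|·(1 − |z|)/|z| ≤ (1/2)·|z + 1|²/|z| ≤ ((1 + √2)/4)·|z² − 1|·(1 − |z|)/|z|. -/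
/-!
Put `r = ‖z‖`, `a = ‖z + 1‖`, `b = ‖z - 1‖`, so that `‖z² - 1‖ = a b`; the two bounds follow from
`b (1 - r) ≤ 2 a ≤ (1 + √2) b (1 - r)` on multiplying by `a / (4 r)`. The first holds on the whole
disk since `b ≤ 2` and `1 - r ≤ a`. For the second, the hypothesis says
`Re z · (1 + r²) ≤ -2 r²`, whence `a² (1 + r²) ≤ (1 - r²)²` and `1 + r² ≤ b²`; it remains that
`(1 + r) / (1 + r²)` is at most `(1 + √2) / 2`, its maximum, attained at `r = √2 - 1`.
-/

open Metric Set

namespace Complex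

lemma norm_add_one_sq (z : ℂ) : ‖z + 1‖ ^ 2 = ‖z‖ ^ 2 + 2 * z.re + 1 := by
  simp only [Complex.sq_norm, normSq_add, map_one, mul_one]
  ring

lemma norm_sub_one_sq (z : ℂ) : ‖z - 1‖ ^ 2 = ‖z‖ ^ 2 - 2 * z.re + 1 := by
  simp only [Complex.sq_norm, normSq_sub, map_one, mul_one]
  ring

lemma re_mul_one_add_norm_sq_le_of_re_add_inv (z : ℂ) (hz0 : z ≠ 0)
    (h : ((z + z⁻¹) / 2).re ≤ -1) : z.re * (1 + ‖z‖ ^ 2) ≤ -2 * ‖z‖ ^ 2 := by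
  have hn : 0 < ‖z‖ ^ 2 := by positivity
  rw [div_ofNat_re, add_re, inv_re, ← Complex.sq_norm] at h
  have : (z.re + z.re / ‖z‖ ^ 2) * ‖z‖ ^ 2 ≤ -2 * ‖z‖ ^ 2 := by nlinarith
  rwa [add_mul, div_mul_cancel₀ _ hn.ne', add_comm, ← mul_one_add] at this

lemma norm_sub_one_mul_one_sub_norm_le (z : ℂ) (hz : ‖z‖ ≤ 1) :
    ‖z - 1‖ * (1 - ‖z‖) ≤ 2 * ‖z + 1‖ := by
  have hb : ‖z - 1‖ ≤ 2 := (norm_sub_le z 1).trans (by rw [norm_one]; linarith)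
  have ha : 1 - ‖z‖ ≤ ‖z + 1‖ := by simpa [add_comm] using norm_sub_norm_le (1 : ℂ) (-z)
  nlinarith [norm_nonneg (z - 1)]

lemma norm_add_one_sq_mul_le (z : ℂ) (hx : z.re * (1 + ‖z‖ ^ 2) ≤ -2 * ‖z‖ ^ 2) :
    ‖z + 1‖ ^ 2 * (1 + ‖z‖ ^ 2) ≤ (1 - ‖z‖ ^ 2) ^ 2 := by
  rw [norm_add_one_sq]
  linear_combination 2 * hx

lemma one_add_norm_sq_le (z : ℂ) (hx : z.re ≤ 0) : 1 + ‖z‖ ^ 2 ≤ ‖z - 1‖ ^ 2 := by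
  rw [norm_sub_one_sq]
  linarith

lemma two_mul_norm_add_one_le (z : ℂ) (hz : ‖z‖ ≤ 1)
    (hx : z.re * (1 + ‖z‖ ^ 2) ≤ -2 * ‖z‖ ^ 2) :
    2 * ‖z + 1‖ ≤ (1 + √2) * (‖z - 1‖ * (1 - ‖z‖)) := by
  set r := ‖z‖
  have hq : 0 < 1 + r ^ 2 := by positivity
  have hre : z.re ≤ 0 := nonpos_of_mul_nonpos_left (hx.trans (by nlinarith)) hq
  have ha := norm_add_one_sq_mul_le z hx
  have hb := one_add_norm_sq_le z hre
  have hk := two_mul_one_add_le r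
  have hsq : (2 * ‖z + 1‖) ^ 2 * (1 + r ^ 2) ≤
      ((1 + √2) * (‖z - 1‖ * (1 - r))) ^ 2 * (1 + r ^ 2) :=
    calc (2 * ‖z + 1‖) ^ 2 * (1 + r ^ 2) ≤ 4 * (1 - r ^ 2) ^ 2 := by linarith
      _ = (2 * (1 + r)) ^ 2 * (1 - r) ^ 2 := by ring
      _ ≤ ((1 + √2) * (1 + r ^ 2)) ^ 2 * (1 - r) ^ 2 := by gcongr
      _ = (1 + √2) ^ 2 * (1 - r) ^ 2 * (1 + r ^ 2) * (1 + r ^ 2) := by ring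
      _ ≤ (1 + √2) ^ 2 * (1 - r) ^ 2 * ‖z - 1‖ ^ 2 * (1 + r ^ 2) := by gcongr
      _ = ((1 + √2) * (‖z - 1‖ * (1 - r))) ^ 2 * (1 + r ^ 2) := by ring
  have hr1 : 0 ≤ 1 - r := by linarith
  exact le_of_sq_le_sq (le_of_mul_le_mul_right hsq hq) (by positivity)

end Complex

/-- Estimate in the region where `Re((z+z⁻¹)/2) ≤ −1`. -/
theorem stmt_8 (z : ℂ) (hz : z ∈ ball (0:ℂ) 1) (hz0 : z ≠ 0)
    (hre : ((z + z⁻¹) / 2).re ≤ -1) :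
    (1/4) * (‖z^2 - 1‖ * (1 - ‖z‖) / ‖z‖) ≤ (1/2) * (‖z + 1‖^2 / ‖z‖) ∧
    (1/2) * (‖z + 1‖^2 / ‖z‖) ≤ ((1 + Real.sqrt 2) / 4) * (‖z^2 - 1‖ * (1 - ‖z‖) / ‖z‖) := by
  have hr : ‖z‖ ≠ 0 := norm_ne_zero_iff.mpr hz0
  have hz1 : ‖z‖ ≤ 1 := (mem_ball_zero_iff.mp hz).le
  have hfac : ‖z ^ 2 - 1‖ = ‖z + 1‖ * ‖z - 1‖ := by rw [← norm_mul]; ring_nf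
  have hlow := Complex.norm_sub_one_mul_one_sub_norm_le z hz1
  have hupp := Complex.two_mul_norm_add_one_le z hz1
    (Complex.re_mul_one_add_norm_sq_le_of_re_add_inv z hz0 hre)
  rw [hfac]
  constructor
  · field_simp
    linear_combination 2 * mul_le_mul_of_nonneg_left hlow (norm_nonneg (z + 1))
  · field_simp
    linear_combination 2 * mul_le_mul_of_nonneg_left hupp (norm_nonneg (z + 1))
end

section
/- Let p > 0 and γ > max(1 + p, 2p). Then the constant C_{γ,p} = (γ/2π) ∫_{1/γ}^1 ∫₀^{2π} (rγ − 1)(1−r)^{γ−2} / dist(w(r·e^{iθ}), [−1,1])^p dθ dr is finite, where w(z) = (z + z⁻¹)/2. -/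
open MeasureTheory Set Metric ENNReal

/-!
On the circle `z = r e^{iθ}` the Joukowski map gives `w = A cos θ - i B sin θ` with
`A = (r + r⁻¹)/2`, `B = (r⁻¹ - r)/2`, a point of the ellipse with foci `±1`. Its distance
to `[-1, 1]` is at least `A - 1 ≥ (1 - r)²/2` (attained at the vertex) and at least
`|Im w| = B |sin θ| ≥ (1 - r) |sin θ|`, so it is `≳ (1 - r) (|sin θ| + 1 - r)`.
For `0 ≤ q ≤ p`, `(|sin θ| + 1 - r)^p ≥ |sin θ|^q (1 - r)^(p - q)`, so the integrand is
`≲ (1 - r)^(γ - 2 - 2p + q) |sin θ|^(-q)`. The hypothesis `γ > max (1 + p) (2p)` is exactly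
what allows `max 0 (1 + 2p - γ) < q < min p 1`, and then both factors are integrable, the
second by Jordan's inequality near the zeros `0, π, 2π` of `sin`.
-/

theorem joukowski_ofReal_mul_exp (r θ : ℝ) :
    ((r : ℂ) * Complex.exp (θ * Complex.I) +
        ((r : ℂ) * Complex.exp (θ * Complex.I))⁻¹) / 2 =
      ↑((r + r⁻¹) / 2 * Real.cos θ) - ↑((r⁻¹ - r) / 2 * Real.sin θ) * Complex.I := by
  rw [mul_inv, ← Complex.exp_neg, ← neg_mul, ← Complex.ofReal_neg, Complex.exp_mul_I,
    Complex.exp_mul_I, ← Complex.ofReal_cos, ← Complex.ofReal_sin, ← Complex.ofReal_cos,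
    ← Complex.ofReal_sin, Real.cos_neg, Real.sin_neg]
  push_cast
  ring

theorem abs_im_le_infDist_image_ofReal (w : ℂ) {s : Set ℝ} (hs : s.Nonempty) :
    |w.im| ≤ infDist w (Complex.ofReal '' s) := by
  rw [le_infDist (hs.image _)]
  rintro _ ⟨t, -, rfl⟩
  simpa [Complex.dist_eq] using Complex.abs_im_le_norm (w - t)

/-- With `x = u t`, the difference of the two sides is
`(1 - x) (2A - 1 - x) - (1 - u²) (1 - t²)`, and `(1 - u²) (1 - t²) ≤ (1 - |x|)²`. -/
theorem sub_one_sq_le_of_ellipse {A B u s t : ℝ} (hA : 1 ≤ A) (hAB : A ^ 2 - B ^ 2 = 1)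
    (hus : u ^ 2 + s ^ 2 = 1) (ht : |t| ≤ 1) : (A - 1) ^ 2 ≤ (A * u - t) ^ 2 + (B * s) ^ 2 := by
  have hu : |u| ≤ 1 := by nlinarith [sq_abs u, abs_nonneg u]
  have key : (1 - |u| * |t|) ^ 2 ≤ (1 - u * t) * (2 * A - 1 - u * t) := by
    have : u * t ≤ |u| * |t| := by rw [← abs_mul]; exact le_abs_self _
    nlinarith [mul_le_one₀ hu (abs_nonneg t) ht, abs_nonneg u, abs_nonneg t]
  nlinarith [sq_abs u, sq_abs t, sq_nonneg (|u| - |t|)]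

theorem sub_one_le_infDist_ellipse_segment {A B : ℝ} (hA : 1 ≤ A) (hAB : A ^ 2 - B ^ 2 = 1)
    (θ : ℝ) : A - 1 ≤ infDist (↑(A * Real.cos θ) - ↑(B * Real.sin θ) * Complex.I)
      (Complex.ofReal '' Icc (-1) 1) := by
  rw [le_infDist ((nonempty_Icc.2 (by norm_num)).image _)]
  rintro _ ⟨t, ht, rfl⟩
  refine (pow_le_pow_iff_left₀ (by linarith) dist_nonneg two_ne_zero).1 ?_
  have hdist : dist (↑(A * Real.cos θ) - ↑(B * Real.sin θ) * Complex.I) (t : ℂ) ^ 2 =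
      (A * Real.cos θ - t) ^ 2 + (B * Real.sin θ) ^ 2 := by
    rw [Complex.dist_eq, Complex.sq_norm, Complex.normSq_apply]
    simp only [Complex.sub_re, Complex.sub_im, Complex.mul_re, Complex.mul_im, Complex.ofReal_re,
      Complex.ofReal_im, Complex.I_re, Complex.I_im]
    ring
  rw [hdist]
  exact sub_one_sq_le_of_ellipse hA hAB (Real.cos_sq_add_sin_sq θ) (abs_le.2 ht)

theorem le_infDist_joukowski {r : ℝ} (hr0 : 0 < r) (hr1 : r < 1) (θ : ℝ) :
    (1 - r) * (|Real.sin θ| + (1 - r)) / 4 ≤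
      infDist (((r : ℂ) * Complex.exp (θ * Complex.I) +
        ((r : ℂ) * Complex.exp (θ * Complex.I))⁻¹) / 2) (Complex.ofReal '' Icc (-1) 1) := by
  rw [joukowski_ofReal_mul_exp]
  have hA : 1 + (1 - r) ^ 2 / 2 ≤ (r + r⁻¹) / 2 := by
    have : 3 - 3 * r + r ^ 2 ≤ r⁻¹ := by
      rw [← one_div, le_div_iff₀ hr0]; nlinarith [pow_pos (sub_pos.2 hr1) 3]
    linarith
  have hB : 1 - r ≤ (r⁻¹ - r) / 2 := by
    have : 2 - r ≤ r⁻¹ := by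
      rw [← one_div, le_div_iff₀ hr0]; nlinarith [sq_nonneg (1 - r)]
    linarith
  set A := (r + r⁻¹) / 2
  set B := (r⁻¹ - r) / 2
  have hAB : A ^ 2 - B ^ 2 = 1 := by
    simp only [A, B]; ring_nf; field_simp
  have hreal := sub_one_le_infDist_ellipse_segment (by nlinarith) hAB θ
  have himag := abs_im_le_infDist_image_ofReal
    (↑(A * Real.cos θ) - ↑(B * Real.sin θ) * Complex.I)
    (nonempty_Icc.2 (by norm_num : (-1 : ℝ) ≤ 1))
  have him : (↑(A * Real.cos θ) - ↑(B * Real.sin θ) * Complex.I).im = -(B * Real.sin θ) := by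
    simp [-Complex.ofReal_mul]
  rw [him, abs_neg, abs_mul, abs_of_nonneg (by linarith)] at himag
  nlinarith [abs_nonneg (Real.sin θ)]

theorem rpow_mul_rpow_sub_le_add_rpow {a b p q : ℝ} (ha : 0 ≤ a) (hb : 0 ≤ b) (hq : 0 ≤ q)
    (hqp : q ≤ p) : a ^ q * b ^ (p - q) ≤ (a + b) ^ p := by
  calc a ^ q * b ^ (p - q) ≤ (a + b) ^ q * (a + b) ^ (p - q) := by gcongr <;> linarith
    _ = (a + b) ^ p := by rw [← Real.rpow_add_of_nonneg (by positivity) hq (by linarith)]; ring_nf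

theorem div_infDist_joukowski_rpow_le {p q γ r θ : ℝ} (hq : 0 ≤ q) (hqp : q ≤ p)
    (hr0 : 0 < r) (hr1 : r < 1) (hrγ : 1 ≤ r * γ) (hθ : Real.sin θ ≠ 0) :
    (r * γ - 1) * (1 - r) ^ (γ - 2) /
        infDist (((r : ℂ) * Complex.exp (θ * Complex.I) +
          ((r : ℂ) * Complex.exp (θ * Complex.I))⁻¹) / 2)
          (Complex.ofReal '' Icc (-1) 1) ^ p ≤
      γ * 4 ^ p * (1 - r) ^ (γ - 2 - 2 * p + q) * |Real.sin θ| ^ (-q) := by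
  set D := infDist (((r : ℂ) * Complex.exp (θ * Complex.I) +
    ((r : ℂ) * Complex.exp (θ * Complex.I))⁻¹) / 2) (Complex.ofReal '' Icc (-1) 1)
  have hδ : 0 < 1 - r := sub_pos.2 hr1
  have hs : 0 < |Real.sin θ| := abs_pos.2 hθ
  have hp : 0 ≤ p := hq.trans hqp
  have hγ : 0 < γ := by nlinarith
  have hD : (1 - r) ^ (2 * p - q) * |Real.sin θ| ^ q ≤ 4 ^ p * D ^ p :=
    calc (1 - r) ^ (2 * p - q) * |Real.sin θ| ^ q
        = (1 - r) ^ p * (|Real.sin θ| ^ q * (1 - r) ^ (p - q)) := by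
          rw [show 2 * p - q = p + (p - q) by ring, Real.rpow_add hδ]; ring
      _ ≤ (1 - r) ^ p * (|Real.sin θ| + (1 - r)) ^ p := by
          gcongr; exact rpow_mul_rpow_sub_le_add_rpow hs.le hδ.le hq hqp
      _ = 4 ^ p * ((1 - r) * (|Real.sin θ| + (1 - r)) / 4) ^ p := by
          rw [Real.div_rpow (by positivity) (by norm_num), Real.mul_rpow hδ.le (by positivity)]
          field_simp
      _ ≤ 4 ^ p * D ^ p := by gcongr; exact le_infDist_joukowski hr0 hr1 θ
  calc (r * γ - 1) * (1 - r) ^ (γ - 2) / D ^ p ≤ γ * (1 - r) ^ (γ - 2) / D ^ p := by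
        gcongr ?_ / _
        · exact Real.rpow_nonneg infDist_nonneg p
        · exact mul_le_mul_of_nonneg_right (by nlinarith) (Real.rpow_nonneg hδ.le _)
    _ ≤ γ * (1 - r) ^ (γ - 2) / ((1 - r) ^ (2 * p - q) * |Real.sin θ| ^ q / 4 ^ p) := by
        gcongr
        rw [div_le_iff₀ (by positivity)]; linarith
    _ = γ * 4 ^ p * (1 - r) ^ (γ - 2 - 2 * p + q) * |Real.sin θ| ^ (-q) := by
        rw [show γ - 2 - 2 * p + q = γ - 2 - (2 * p - q) by ring, Real.rpow_sub hδ (γ - 2),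
          Real.rpow_neg hs.le]
        field_simp

theorem ae_sin_ne_zero : ∀ᵐ θ : ℝ, Real.sin θ ≠ 0 := by
  refine measure_mono_null (fun θ hθ => Real.sin_eq_zero_iff.1 (not_not.1 hθ)) ?_
  exact (countable_range fun n : ℤ => (n : ℝ) * Real.pi).measure_zero volume

theorem exists_two_div_pi_mul_abs_sub_le_abs_sin {θ : ℝ} (h0 : 0 ≤ θ)
    (h2π : θ ≤ 2 * Real.pi) :
    ∃ k ∈ Finset.range 3, 2 / Real.pi * |θ - k * Real.pi| ≤ |Real.sin θ| := by
  have hπ := Real.pi_pos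
  have key : ∀ k : ℕ, |Real.sin (θ - k * Real.pi)| = |Real.sin θ| := fun k => by
    simp [Real.sin_sub_nat_mul_pi, abs_mul]
  have bound : ∀ k : ℕ, |θ - k * Real.pi| ≤ Real.pi / 2 → k < 3 →
      ∃ k ∈ Finset.range 3, 2 / Real.pi * |θ - k * Real.pi| ≤ |Real.sin θ| :=
    fun k hk hk3 => ⟨k, Finset.mem_range.2 hk3, key k ▸ Real.mul_abs_le_abs_sin hk⟩
  rcases le_or_gt θ (Real.pi / 2) with h | h
  · exact bound 0 (by rw [abs_le]; push_cast; constructor <;> linarith) (by norm_num)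
  rcases le_or_gt θ (3 * Real.pi / 2) with h' | h'
  · exact bound 1 (by rw [abs_le]; push_cast; constructor <;> linarith) (by norm_num)
  · exact bound 2 (by rw [abs_le]; push_cast; constructor <;> linarith) (by norm_num)

theorem abs_sin_rpow_neg_le {q θ : ℝ} (hq : 0 ≤ q) (h0 : 0 ≤ θ) (h2π : θ ≤ 2 * Real.pi)
    (hθ : Real.sin θ ≠ 0) :
    |Real.sin θ| ^ (-q) ≤
      (Real.pi / 2) ^ q * ∑ k ∈ Finset.range 3, |θ - k * Real.pi| ^ (-q) := by
  obtain ⟨k, hk, hle⟩ := exists_two_div_pi_mul_abs_sub_le_abs_sin h0 h2π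
  have hk0 : 0 < |θ - k * Real.pi| := by
    refine abs_pos.2 (sub_ne_zero.2 fun h => hθ ?_)
    rw [h, Real.sin_nat_mul_pi]
  calc |Real.sin θ| ^ (-q) ≤ (2 / Real.pi * |θ - k * Real.pi|) ^ (-q) :=
        Real.rpow_le_rpow_of_nonpos (by positivity) hle (by linarith)
    _ = (Real.pi / 2) ^ q * |θ - k * Real.pi| ^ (-q) := by
        rw [Real.mul_rpow (by positivity) hk0.le, Real.rpow_neg (by positivity),
          ← Real.inv_rpow (by positivity), inv_div]
    _ ≤ (Real.pi / 2) ^ q * ∑ k ∈ Finset.range 3, |θ - k * Real.pi| ^ (-q) := by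
        gcongr
        exact Finset.single_le_sum (f := fun k : ℕ => |θ - k * Real.pi| ^ (-q))
          (fun _ _ => by positivity) hk

theorem intervalIntegrable_abs_sub_rpow {r : ℝ} (hr : -1 < r) (c a b : ℝ) :
    IntervalIntegrable (fun x => |x - c| ^ r) volume a b := by
  have hpos : ∀ d, 0 ≤ d → IntervalIntegrable (fun x : ℝ => |x| ^ r) volume 0 d :=
    fun d hd => (intervalIntegral.intervalIntegrable_rpow' hr).congr fun x hx => by
      rw [uIoc_of_le hd] at hx
      simp [abs_of_pos hx.1]
  have habs : ∀ d, IntervalIntegrable (fun x : ℝ => |x| ^ r) volume 0 d := fun d => by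
    rcases le_total 0 d with hd | hd
    · exact hpos d hd
    · simpa using
        (IntervalIntegrable.iff_comp_neg (by finiteness)).1 (hpos (-d) (by linarith))
  simpa using ((habs (a - c)).symm.trans (habs (b - c))).comp_sub_right c

theorem integrableOn_abs_sin_rpow_neg {q : ℝ} (hq0 : 0 ≤ q) (hq1 : q < 1) :
    IntegrableOn (fun θ => |Real.sin θ| ^ (-q)) (Ioo 0 (2 * Real.pi)) := by
  have hbound : IntegrableOn
      (fun θ => (Real.pi / 2) ^ q * ∑ k ∈ Finset.range 3, |θ - k * Real.pi| ^ (-q))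
      (Ioo 0 (2 * Real.pi)) := by
    refine (Integrable.const_mul ?_ _)
    refine integrable_finsetSum _ fun k _ => ?_
    exact ((intervalIntegrable_iff_integrableOn_Ioc_of_le (by positivity)).1
      (intervalIntegrable_abs_sub_rpow (by linarith) _ _ _)).mono_set Ioo_subset_Ioc_self
  refine hbound.mono' (Real.continuous_sin.abs.measurable.pow_const _).aestronglyMeasurable ?_
  filter_upwards [ae_restrict_mem measurableSet_Ioo, ae_restrict_of_ae ae_sin_ne_zero]
    with θ hθ hsin
  rw [Real.norm_of_nonneg (by positivity)]
  exact abs_sin_rpow_neg_le hq0 hθ.1.le hθ.2.le hsin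

theorem lintegral_lintegral_ofReal_lt_top_of_le_mul {α β : Type*} [MeasurableSpace α]
    [MeasurableSpace β] {μ : Measure α} {ν : Measure β} {f : α → β → ℝ}
    {u : α → ℝ} {v : β → ℝ}
    (hu : Integrable u μ) (hv : Integrable v ν) (hu0 : 0 ≤ᵐ[μ] u)
    (hf : ∀ᵐ x ∂μ, ∀ᵐ y ∂ν, f x y ≤ u x * v y) :
    ∫⁻ x, ∫⁻ y, ENNReal.ofReal (f x y) ∂ν ∂μ < ∞ := by
  calc ∫⁻ x, ∫⁻ y, ENNReal.ofReal (f x y) ∂ν ∂μ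
      ≤ ∫⁻ x, ENNReal.ofReal (u x) * ∫⁻ y, ENNReal.ofReal (v y) ∂ν ∂μ := by
        refine lintegral_mono_ae ?_
        filter_upwards [hu0, hf] with x hx0 hx
        rw [← lintegral_const_mul' _ _ ofReal_ne_top]
        refine lintegral_mono_ae (hx.mono fun y hy => ?_)
        rw [← ENNReal.ofReal_mul hx0]
        exact ENNReal.ofReal_le_ofReal hy
    _ = (∫⁻ x, ENNReal.ofReal (u x) ∂μ) * ∫⁻ y, ENNReal.ofReal (v y) ∂ν :=
        lintegral_mul_const' _ _ hv.lintegral_lt_top.ne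
    _ < ∞ := mul_lt_top hu.lintegral_lt_top hv.lintegral_lt_top

/-- Finiteness of the constant `C_{γ,p}` of Theorem 4.3 for `γ > max(1+p, 2p)`. -/
theorem stmt_10 (p γ : ℝ) (hp : 0 < p) (hγ : max (1 + p) (2 * p) < γ) :
    (∫⁻ r in Ioo (1/γ) 1, ∫⁻ θ in Ioo (0:ℝ) (2 * Real.pi),
        ENNReal.ofReal ((r * γ - 1) * (1 - r) ^ (γ - 2) /
          (Metric.infDist
            (((r : ℂ) * Complex.exp ((θ : ℂ) * Complex.I) +
              ((r : ℂ) * Complex.exp ((θ : ℂ) * Complex.I))⁻¹) / 2)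
            (Complex.ofReal '' Icc (-1:ℝ) 1)) ^ p)) < ⊤ := by
  rw [max_lt_iff] at hγ
  obtain ⟨q, hq_lo, hq_hi⟩ : ∃ q, max 0 (1 + 2 * p - γ) < q ∧ q < min p 1 :=
    exists_between (max_lt (lt_min hp one_pos) (lt_min (by linarith) (by linarith)))
  rw [max_lt_iff] at hq_lo
  rw [lt_min_iff] at hq_hi
  have hγ0 : 0 < γ := by linarith
  have he : -1 < γ - 2 - 2 * p + q := by linarith
  refine lintegral_lintegral_ofReal_lt_top_of_le_mul
    (u := fun r => γ * 4 ^ p * (1 - r) ^ (γ - 2 - 2 * p + q))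
    ?_ (integrableOn_abs_sin_rpow_neg hq_lo.1.le hq_hi.2) ?_ ?_
  · have := (intervalIntegrable_iff_integrableOn_Ioc_of_le (by bound)).1
      (intervalIntegrable_abs_sub_rpow he 1 (1 / γ) 1)
    refine ((this.mono_set Ioo_subset_Ioc_self).congr_fun (fun r hr => ?_)
      measurableSet_Ioo).const_mul _
    rw [abs_sub_comm, abs_of_pos (sub_pos.2 hr.2)]
  · filter_upwards [ae_restrict_mem measurableSet_Ioo] with r hr
    exact mul_nonneg (by positivity) (Real.rpow_nonneg (sub_nonneg.2 hr.2.le) _)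
  · filter_upwards [ae_restrict_mem measurableSet_Ioo] with r hr
    filter_upwards [ae_restrict_of_ae ae_sin_ne_zero] with θ hθ
    exact div_infDist_joukowski_rpow_le hq_lo.1.le hq_hi.1.le ((one_div_pos.2 hγ0).trans hr.1)
      hr.2 ((div_lt_iff₀ hγ0).1 hr.1).le hθ
end

section
/- For every p > 0 there exists a constant C₀ > 0 such that for all z in the open unit disk U with z ≠ 0, setting w(z) = (z + z⁻¹)/2, one has 1 / dist(w(z), [−1,1])^p ≤ C₀ / ((1 − |z|)^{1+p} · dist(z, {−1,1})^{2p}). -/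
/-! Every `x ∈ [-1, 1]` is `w(a)` for some `a` on the unit circle, where `a⁻¹ = conj a`, and
`w(z) - w(a) = (z - a)(z - conj a) / (2z)`. Both factors are at least `1 - |z|`, and one of `±1`
lies within `|a - conj a|` of `a`, so `dist(z, {±1}) ≤ 3 max(|z - a|, |z - conj a|)`. Hence
`|w(z) - x| ≥ (1 - |z|) dist(z, {±1}) / 6 ≥ (1 - |z|) dist(z, {±1})² / 12`; raising this to the
power `p` and using `(1 - |z|)^(1 + p) ≤ (1 - |z|)^p` gives the bound with `C₀ = 12^p`. -/

open Metric Set Complex ComplexConjugate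

lemma joukowski_sub_joukowski {K : Type*} [Field K] {z a b : K} (hz : z ≠ 0) (hab : a * b = 1) :
    (z + z⁻¹) / 2 - (a + b) / 2 = (z - a) * (z - b) / (2 * z) := by
  rcases eq_or_ne (2 : K) 0 with h2 | h2
  · simp [h2]
  · field_simp
    linear_combination -hab

lemma exists_norm_eq_one_re_eq {x : ℝ} (hx : x ∈ Icc (-1 : ℝ) 1) : ∃ a : ℂ, ‖a‖ = 1 ∧ a.re = x :=
  ⟨exp (Real.arccos x * I), norm_exp_ofReal_mul_I _, by
    rw [exp_ofReal_mul_I_re, Real.cos_arccos hx.1 hx.2]⟩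

lemma exists_mem_neg_one_one_norm_sub_le {a : ℂ} (ha : ‖a‖ = 1) :
    ∃ σ ∈ ({-1, 1} : Set ℂ), ‖a - σ‖ ≤ ‖a - conj a‖ := by
  have hre : a.re ^ 2 + a.im ^ 2 = 1 := by
    rw [sq, sq, ← normSq_apply, ← Complex.sq_norm, ha, one_pow]
  have hconj : ‖a - conj a‖ ^ 2 = 4 * a.im ^ 2 := by
    rw [sub_conj, norm_mul, norm_I, mul_one, norm_real, Real.norm_eq_abs, sq_abs]; ring
  have key : ∀ σ : ℝ, σ ^ 2 = 1 → 0 ≤ σ * a.re → ‖a - σ‖ ≤ ‖a - conj a‖ := by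
    intro σ hσ hσa
    refine (pow_le_pow_iff_left₀ (norm_nonneg _) (norm_nonneg _) two_ne_zero).1 ?_
    rw [hconj, Complex.sq_norm, normSq_apply]
    simp only [sub_re, sub_im, ofReal_re, ofReal_im, sub_zero]
    have ht : (σ * a.re) ^ 2 = a.re ^ 2 := by rw [mul_pow, hσ, one_mul]
    have ht1 : σ * a.re ≤ 1 := by nlinarith
    nlinarith [mul_nonneg hσa (sub_nonneg.2 ht1)]
  rcases le_total 0 a.re with h | h
  · exact ⟨1, by simp, by simpa using key 1 (by norm_num) (by simpa using h)⟩
  · exact ⟨-1, by simp, by simpa using key (-1) (by norm_num) (by simpa using h)⟩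

lemma infDist_neg_one_one_le {z a : ℂ} (ha : ‖a‖ = 1) :
    infDist z {-1, 1} ≤ 3 * max ‖z - a‖ ‖z - conj a‖ := by
  obtain ⟨σ, hσ, haσ⟩ := exists_mem_neg_one_one_norm_sub_le ha
  have hab : ‖a - conj a‖ ≤ ‖z - a‖ + ‖z - conj a‖ := by
    simpa [norm_sub_rev z a] using norm_sub_le_norm_sub_add_norm_sub a z (conj a)
  calc infDist z {-1, 1} ≤ ‖z - σ‖ := by rw [← dist_eq_norm]; exact infDist_le_dist_of_mem hσ
    _ ≤ ‖z - a‖ + ‖a - σ‖ := norm_sub_le_norm_sub_add_norm_sub z a σ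
    _ ≤ 3 * max ‖z - a‖ ‖z - conj a‖ := by
      linarith [le_max_left ‖z - a‖ ‖z - conj a‖, le_max_right ‖z - a‖ ‖z - conj a‖]

lemma one_sub_norm_mul_infDist_sq_le_dist {z : ℂ} (hz : ‖z‖ < 1) (hz0 : z ≠ 0) {x : ℝ}
    (hx : x ∈ Icc (-1 : ℝ) 1) :
    (1 - ‖z‖) * infDist z {-1, 1} ^ 2 / 12 ≤ dist ((z + z⁻¹) / 2) x := by
  obtain ⟨a, ha, rfl⟩ := exists_norm_eq_one_re_eq hx
  set d := infDist z ({-1, 1} : Set ℂ)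
  set A := ‖z - a‖
  set B := ‖z - conj a‖
  have hdist : dist ((z + z⁻¹) / 2) a.re = A * B / (2 * ‖z‖) := by
    have hab : a * conj a = 1 := by rw [mul_conj', ha]; simp
    have hre : ((a.re : ℝ) : ℂ) = (a + conj a) / 2 := by rw [add_conj]; push_cast; ring
    rw [dist_eq_norm, hre, joukowski_sub_joukowski hz0 hab, norm_div, norm_mul, norm_mul,
      Complex.norm_two]
  have hA : 1 - ‖z‖ ≤ A := by simpa [ha, norm_sub_rev] using norm_sub_norm_le a z
  have hB : 1 - ‖z‖ ≤ B := by simpa [ha, norm_sub_rev] using norm_sub_norm_le (conj a) z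
  have hd2 : d ≤ 2 := by
    refine (infDist_le_dist_of_mem (by simp : (1 : ℂ) ∈ ({-1, 1} : Set ℂ))).trans ?_
    rw [dist_eq_norm]
    linarith [norm_sub_le z 1, norm_one (α := ℂ)]
  have hmul : (1 - ‖z‖) * d ≤ 3 * (A * B) := by
    rw [← min_mul_max A B, mul_left_comm]
    exact mul_le_mul (le_min hA hB) (infDist_neg_one_one_le ha) infDist_nonneg (by positivity)
  calc (1 - ‖z‖) * d ^ 2 / 12 = (1 - ‖z‖) * d * d / 12 := by ring
    _ ≤ 3 * (A * B) * 2 / 12 := by gcongr; exact infDist_nonneg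
    _ = A * B / 2 := by ring
    _ ≤ A * B / (2 * ‖z‖) :=
      div_le_div_of_nonneg_left (by positivity) (by positivity) (by linarith)
    _ = dist ((z + z⁻¹) / 2) a.re := hdist.symm

lemma one_sub_norm_mul_infDist_sq_le_infDist {z : ℂ} (hz : ‖z‖ < 1) (hz0 : z ≠ 0) :
    (1 - ‖z‖) * infDist z {-1, 1} ^ 2 / 12 ≤
      infDist ((z + z⁻¹) / 2) (ofReal '' Icc (-1 : ℝ) 1) :=
  (le_infDist ((nonempty_Icc.2 (by norm_num)).image ofReal)).2 <|
    forall_mem_image.2 fun _ hx ↦ one_sub_norm_mul_infDist_sq_le_dist hz hz0 hx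

lemma infDist_neg_one_one_pos {z : ℂ} (hz : ‖z‖ < 1) : 0 < infDist z {-1, 1} := by
  refine ((Set.toFinite _).isClosed.notMem_iff_infDist_pos ⟨1, by simp⟩).1 ?_
  rintro (rfl | rfl) <;> simp at hz

lemma one_div_rpow_le_of_mul_sq_le {p δ d D c : ℝ} (hp : 0 ≤ p) (hδ : 0 < δ) (hδ1 : δ ≤ 1)
    (hd : 0 < d) (hc : 0 < c) (h : δ * d ^ 2 / c ≤ D) :
    1 / D ^ p ≤ c ^ p / (δ ^ (1 + p) * d ^ (2 * p)) := by
  have hpos : 0 < δ * d ^ 2 / c := by positivity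
  have hsplit : (δ * d ^ 2 / c) ^ p = δ ^ p * d ^ (2 * p) / c ^ p := by
    rw [Real.div_rpow (by positivity) hc.le, Real.mul_rpow hδ.le (by positivity),
      Real.rpow_mul hd.le, Real.rpow_two]
  calc 1 / D ^ p ≤ 1 / (δ ^ p * d ^ (2 * p) / c ^ p) := by
        rw [← hsplit]
        exact one_div_le_one_div_of_le (by positivity) (Real.rpow_le_rpow hpos.le h hp)
    _ = c ^ p / (δ ^ p * d ^ (2 * p)) := one_div_div _ _
    _ ≤ c ^ p / (δ ^ (1 + p) * d ^ (2 * p)) := by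
        refine div_le_div_of_nonneg_left (by positivity) (by positivity) ?_
        exact mul_le_mul_of_nonneg_right
          (Real.rpow_le_rpow_of_exponent_ge hδ hδ1 (by linarith)) (by positivity)

/-- The function `z ↦ dist(w(z),[-1,1])^{-p}` belongs to the class
`M({-1,1}, 1+p, 2p)`. -/
theorem stmt_11 (p : ℝ) (hp : 0 < p) :
    ∃ C₀ : ℝ, 0 < C₀ ∧ ∀ z ∈ ball (0:ℂ) 1, z ≠ 0 →
      1 / (Metric.infDist ((z + z⁻¹) / 2) (Complex.ofReal '' Icc (-1:ℝ) 1)) ^ p ≤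
        C₀ / ((1 - ‖z‖) ^ (1 + p) * (Metric.infDist z ({-1, 1} : Set ℂ)) ^ (2 * p)) := by
  refine ⟨12 ^ p, by positivity, fun z hz hz0 ↦ ?_⟩
  rw [mem_ball_zero_iff] at hz
  exact one_div_rpow_le_of_mul_sq_le hp.le (by linarith) (by linarith [norm_nonneg z])
    (infDist_neg_one_one_pos hz) (by norm_num) (one_sub_norm_mul_infDist_sq_le_infDist hz hz0)
end

section
/- Let s < 0 be a real number and let z be in the open unit disk U with z ≠ 0. Set λ = s·((z + 1)/(z − 1))². Then λ ∉ [0,∞) and (1/4)·(|λ|/|s|)^{1/2}·|λ − s|·(1 − |z|²)/|z| ≤ dist(λ, [0,∞)) ≤ (|λ|/|s|)^{1/2}·|λ − s|·(1 − |z|²)/|z|. -/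
/-!
With `w = (z + 1) / (z - 1)`, which has `Re w < 0` for `z ∈ U`, the point `λ = s w²` is the
square of `ξ = i √|s| w`, and the right-hand bound equals `4 ‖ξ‖ |Im ξ|`. For every `ξ`,
`‖ξ‖ |Im ξ| ≤ dist (ξ², [0,∞)) ≤ 2 ‖ξ‖ |Im ξ|`: the lower bound comes from the factorisation
`ξ² - t = (ξ + √t)(ξ - √t)` (after replacing `ξ` by `-ξ`, so that `Re ξ ≥ 0`), the upper one
from projecting `ξ²` onto `[0,∞)`.
-/

open Metric Set Complex

namespace Complex

lemma norm_le_norm_add_ofReal {ξ : ℂ} {r : ℝ} (hξ : 0 ≤ ξ.re) (hr : 0 ≤ r) :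
    ‖ξ‖ ≤ ‖ξ + r‖ := by
  rw [← sq_le_sq₀ (norm_nonneg _) (norm_nonneg _), Complex.sq_norm, Complex.sq_norm,
    normSq_apply, normSq_apply]
  simp only [add_re, add_im, ofReal_re, ofReal_im, add_zero]
  nlinarith

lemma norm_mul_abs_im_le_norm_sq_sub_ofReal (ξ : ℂ) {t : ℝ} (ht : 0 ≤ t) :
    ‖ξ‖ * |ξ.im| ≤ ‖ξ ^ 2 - t‖ := by
  wlog hξ : 0 ≤ ξ.re generalizing ξ
  · simpa using this (-ξ) (by simp; linarith)
  have hfac : ξ ^ 2 - t = (ξ + √t) * (ξ - √t) := by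
    rw [← sq_sub_sq, ← ofReal_pow, Real.sq_sqrt ht]
  rw [hfac, norm_mul]
  refine mul_le_mul (norm_le_norm_add_ofReal hξ (Real.sqrt_nonneg t)) ?_ (abs_nonneg _)
    (norm_nonneg _)
  simpa using abs_im_le_norm (ξ - √t)

lemma infDist_ofReal_Ici_le_abs_im {ζ : ℂ} (hζ : 0 ≤ ζ.re) :
    infDist ζ (ofReal '' Ici 0) ≤ |ζ.im| := by
  refine (infDist_le_dist_of_mem (mem_image_of_mem _ (mem_Ici.2 hζ))).trans_eq ?_
  rw [dist_of_re_eq (by simp)]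
  simp

lemma infDist_ofReal_Ici_le_norm (ζ : ℂ) : infDist ζ (ofReal '' Ici 0) ≤ ‖ζ‖ := by
  simpa using infDist_le_dist_of_mem (x := ζ) (mem_image_of_mem ofReal (self_mem_Ici (a := 0)))

lemma norm_mul_abs_im_le_infDist_sq (ξ : ℂ) :
    ‖ξ‖ * |ξ.im| ≤ infDist (ξ ^ 2) (ofReal '' Ici 0) := by
  rw [le_infDist (Set.image_nonempty.2 nonempty_Ici)]
  rintro _ ⟨t, ht, rfl⟩
  rw [dist_eq]
  exact norm_mul_abs_im_le_norm_sq_sub_ofReal ξ ht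

lemma infDist_sq_le_two_mul_norm_mul_abs_im (ξ : ℂ) :
    infDist (ξ ^ 2) (ofReal '' Ici 0) ≤ 2 * ‖ξ‖ * |ξ.im| := by
  have hnorm : ‖ξ‖ ^ 2 = ξ.re ^ 2 + ξ.im ^ 2 := by rw [Complex.sq_norm, normSq_apply]; ring
  rcases le_total (ξ.im ^ 2) (ξ.re ^ 2) with h | h
  · have hre : 0 ≤ (ξ ^ 2).re := by rw [sq, mul_re]; nlinarith
    refine (infDist_ofReal_Ici_le_abs_im hre).trans ?_
    calc |(ξ ^ 2).im| = 2 * |ξ.re| * |ξ.im| := by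
          rw [← abs_two, ← abs_mul, ← abs_mul, sq, mul_im]
          ring_nf
      _ ≤ 2 * ‖ξ‖ * |ξ.im| := by gcongr; exact abs_re_le_norm ξ
  · refine (infDist_ofReal_Ici_le_norm _).trans ?_
    have hle : ‖ξ‖ ≤ 2 * |ξ.im| := by
      rw [← pow_le_pow_iff_left₀ (norm_nonneg ξ) (by positivity) two_ne_zero, hnorm, mul_pow,
        sq_abs]
      nlinarith
    calc ‖ξ ^ 2‖ = ‖ξ‖ * ‖ξ‖ := by rw [norm_pow, sq]
      _ ≤ ‖ξ‖ * (2 * |ξ.im|) := by gcongr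
      _ = 2 * ‖ξ‖ * |ξ.im| := by ring

lemma add_one_div_sub_one_re (z : ℂ) :
    ((z + 1) / (z - 1)).re = (‖z‖ ^ 2 - 1) / ‖z - 1‖ ^ 2 := by
  rw [div_re, ← add_div, Complex.sq_norm, Complex.sq_norm, normSq_apply, normSq_apply]
  simp only [add_re, add_im, sub_re, sub_im, one_re, one_im]
  ring

lemma add_one_div_sub_one_sq_sub_one {z : ℂ} (hz : z ≠ 1) :
    ((z + 1) / (z - 1)) ^ 2 - 1 = 4 * z / (z - 1) ^ 2 := by
  have : z - 1 ≠ 0 := sub_ne_zero.2 hz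
  field_simp
  ring

lemma sqrt_norm_div_abs_mul_eq {s : ℝ} (hs : s ≠ 0) {z : ℂ} (hz0 : z ≠ 0) (hz1 : z ≠ 1) :
    √(‖(s : ℂ) * ((z + 1) / (z - 1)) ^ 2‖ / |s|) *
        (‖(s : ℂ) * ((z + 1) / (z - 1)) ^ 2 - s‖ * (1 - ‖z‖ ^ 2) / ‖z‖) =
      4 * (|s| * ‖(z + 1) / (z - 1)‖ * -((z + 1) / (z - 1)).re) := by
  have hsqrt : √(‖(s : ℂ) * ((z + 1) / (z - 1)) ^ 2‖ / |s|) = ‖(z + 1) / (z - 1)‖ := by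
    rw [norm_mul, norm_pow, norm_real, Real.norm_eq_abs,
      mul_div_cancel_left₀ _ (abs_ne_zero.2 hs), Real.sqrt_sq (norm_nonneg _)]
  have hsub : ‖(s : ℂ) * ((z + 1) / (z - 1)) ^ 2 - s‖ = |s| * (4 * ‖z‖ / ‖z - 1‖ ^ 2) := by
    rw [← mul_sub_one, add_one_div_sub_one_sq_sub_one hz1, norm_mul, norm_real, Real.norm_eq_abs,
      norm_div, norm_mul, norm_pow, RCLike.norm_ofNat]
  have hnorm : ‖z - 1‖ ≠ 0 := norm_ne_zero_iff.2 (sub_ne_zero.2 hz1)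
  rw [hsqrt, hsub, add_one_div_sub_one_re]
  field_simp
  ring

lemma I_mul_sqrt_abs_mul_sq {s : ℝ} (hs : s ≤ 0) (w : ℂ) : (I * √|s| * w) ^ 2 = s * w ^ 2 := by
  rw [mul_pow, mul_pow, I_sq, ← ofReal_pow, Real.sq_sqrt (abs_nonneg s), abs_of_nonpos hs]
  push_cast
  ring

lemma norm_mul_abs_im_I_mul_sqrt_mul {a : ℝ} (ha : 0 ≤ a) (w : ℂ) :
    ‖I * √a * w‖ * |(I * √a * w).im| = a * ‖w‖ * |w.re| := by
  have him : (I * √a * w).im = √a * w.re := by simp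
  have hnorm : ‖I * √a * w‖ = √a * ‖w‖ := by simp
  rw [hnorm, him, abs_mul, abs_of_nonneg (Real.sqrt_nonneg _)]
  linear_combination (‖w‖ * |w.re|) * Real.mul_self_sqrt ha

end Complex

/-- Lemma 5.3 (Lemma `lem:hg`): two-sided estimate for the distance of
`λ = s((z+1)/(z−1))²` to `[0,∞)` via the Koebe distortion theorem. -/
theorem stmt_12 (s : ℝ) (hs : s < 0) (z : ℂ) (hz : z ∈ ball (0:ℂ) 1) (hz0 : z ≠ 0) :
    (s : ℂ) * ((z + 1) / (z - 1)) ^ 2 ∉ Complex.ofReal '' Ici (0:ℝ) ∧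
    (1/4) * Real.sqrt (‖(s : ℂ) * ((z + 1) / (z - 1)) ^ 2‖ / |s|) *
        (‖(s : ℂ) * ((z + 1) / (z - 1)) ^ 2 - (s : ℂ)‖ * (1 - ‖z‖^2) / ‖z‖) ≤
      Metric.infDist ((s : ℂ) * ((z + 1) / (z - 1)) ^ 2) (Complex.ofReal '' Ici (0:ℝ)) ∧
    Metric.infDist ((s : ℂ) * ((z + 1) / (z - 1)) ^ 2) (Complex.ofReal '' Ici (0:ℝ)) ≤
      Real.sqrt (‖(s : ℂ) * ((z + 1) / (z - 1)) ^ 2‖ / |s|) *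
        (‖(s : ℂ) * ((z + 1) / (z - 1)) ^ 2 - (s : ℂ)‖ * (1 - ‖z‖^2) / ‖z‖) := by
  have hz : ‖z‖ < 1 := mem_ball_zero_iff.1 hz
  have hz1 : z ≠ 1 := by rintro rfl; simp at hz
  rw [mul_assoc (1 / 4 : ℝ), sqrt_norm_div_abs_mul_eq hs.ne hz0 hz1]
  set w := (z + 1) / (z - 1)
  have hw : w.re < 0 := by
    rw [add_one_div_sub_one_re]
    exact div_neg_of_neg_of_pos (by nlinarith [norm_nonneg z])
      (pow_pos (norm_pos_iff.2 (sub_ne_zero.2 hz1)) 2)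
  set ξ : ℂ := I * √|s| * w
  have hweight : |s| * ‖w‖ * -w.re = ‖ξ‖ * |ξ.im| := by
    rw [norm_mul_abs_im_I_mul_sqrt_mul (abs_nonneg s), abs_of_neg hw]
  have hpos : 0 < ‖ξ‖ * |ξ.im| := by
    have hw0 : w ≠ 0 := fun h => by simp [h] at hw
    rw [← hweight]
    exact mul_pos (mul_pos (abs_pos.2 hs.ne) (norm_pos_iff.2 hw0)) (neg_pos.2 hw)
  rw [← I_mul_sqrt_abs_mul_sq hs.le, hweight]
  refine ⟨fun hmem => ?_, ?_, ?_⟩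
  · linarith [norm_mul_abs_im_le_infDist_sq ξ, infDist_zero_of_mem hmem]
  · linarith [norm_mul_abs_im_le_infDist_sq ξ]
  · linarith [infDist_sq_le_two_mul_norm_mul_abs_im ξ]
end

section
/- Let s < 0 be a real number. The map F : U → ℂ defined by F(z) = s·((z + 1)/(z − 1))² is injective on the open unit disk U, and its image F(U) equals ℂ ∖ [0,∞). -/
open Metric Set

/-! The map factors as `z ↦ (z + 1)/(z - 1)`, an involutive Möbius map exchanging the unit disk
and the left half-plane, followed by squaring, which maps the left half-plane bijectively onto
the slit plane `ℂ ∖ (-∞, 0]` (square roots come in pairs `±u`, exactly one of which has negative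
real part), followed by multiplication by `s < 0`, which turns `ℂ ∖ (-∞, 0]` into `ℂ ∖ [0, ∞)`. -/

namespace Complex
open scoped ComplexOrder

noncomputable def cayley (z : ℂ) : ℂ := (z + 1) / (z - 1)

theorem cayley_cayley {z : ℂ} (hz : z ≠ 1) : cayley (cayley z) = z := by
  have : z - 1 ≠ 0 := sub_ne_zero.mpr hz
  unfold cayley
  field_simp
  ring

theorem cayley_re_neg_iff {z : ℂ} : (cayley z).re < 0 ↔ ‖z‖ < 1 := by
  rcases eq_or_ne z 1 with rfl | hz
  · simp [cayley]
  have hpos : 0 < normSq (z - 1) := normSq_pos.mpr (sub_ne_zero.mpr hz)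
  have hre : (cayley z).re = (normSq z - 1) / normSq (z - 1) := by
    rw [cayley, div_re, ← add_div]
    simp only [normSq_apply, add_re, add_im, sub_re, sub_im, one_re, one_im]
    ring
  rw [hre, div_lt_iff₀ hpos, zero_mul, sub_neg, normSq_eq_norm_sq, sq_lt_one_iff₀ (norm_nonneg z)]

theorem bijOn_cayley : BijOn cayley (ball 0 1) {w | w.re < 0} := by
  have hball : ∀ z ∈ ball (0 : ℂ) 1, z ≠ 1 := fun z hz h => by simp [h] at hz
  have hhalf : ∀ w ∈ {w : ℂ | w.re < 0}, w ≠ 1 := fun w hw h => by norm_num [h] at hw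
  refine InvOn.bijOn
    ⟨fun z hz => cayley_cayley (hball z hz), fun w hw => cayley_cayley (hhalf w hw)⟩
    (fun z hz => ?_) (fun w hw => ?_)
  · exact cayley_re_neg_iff.mpr (mem_ball_zero_iff.mp hz)
  · exact mem_ball_zero_iff.mpr (cayley_re_neg_iff.mp (by rwa [cayley_cayley (hhalf w hw)]))

theorem bijOn_sq_re_neg_slitPlane : BijOn (· ^ 2) {u : ℂ | u.re < 0} slitPlane := by
  refine ⟨fun u hu => ?_, fun u hu v hv huv => ?_, fun w hw => ?_⟩
  · rw [mem_slitPlane_iff_not_le_zero, sq_nonpos_iff]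
    exact hu.ne
  · rcases sq_eq_sq_iff_eq_or_eq_neg.mp huv with h | h
    · exact h
    · simp only [mem_ofPred_eq, h, neg_re] at hu hv
      linarith
  · obtain ⟨u, hu⟩ := IsAlgClosed.exists_pow_nat_eq w two_pos
    have hre : u.re ≠ 0 := by
      rw [ne_eq, ← sq_nonpos_iff, hu]
      exact mem_slitPlane_iff_not_le_zero.mp hw
    rcases hre.lt_or_gt with h | h
    · exact ⟨u, h, hu⟩
    · exact ⟨-u, by simpa using h, by simpa using hu⟩

theorem image_ofReal_Ici (r : ℝ) : ofReal '' Ici r = Ici (r : ℂ) := by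
  ext w
  constructor
  · rintro ⟨x, hx, rfl⟩
    exact real_le_real.mpr hx
  · intro hw
    exact ⟨w.re, (le_def.mp hw).1, (eq_re_of_ofReal_le hw).symm⟩

theorem zero_le_ofReal_mul_iff_of_neg {s : ℝ} (hs : s < 0) {v : ℂ} :
    0 ≤ (s : ℂ) * v ↔ v ≤ 0 := by
  simp only [nonneg_iff, nonpos_iff, re_ofReal_mul, im_ofReal_mul]
  constructor
  · rintro ⟨h1, h2⟩
    exact ⟨nonpos_of_mul_nonneg_right h1 hs, by simpa [hs.ne] using h2.symm⟩
  · rintro ⟨h1, h2⟩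
    exact ⟨mul_nonneg_of_nonpos_of_nonpos hs.le h1, by simp [h2]⟩

theorem bijOn_ofReal_mul_slitPlane {s : ℝ} (hs : s < 0) :
    BijOn ((s : ℂ) * ·) slitPlane (Ici 0)ᶜ := by
  have hs0 : (s : ℂ) ≠ 0 := ofReal_ne_zero.mpr hs.ne
  refine InvOn.bijOn (f' := ((s : ℂ)⁻¹ * ·))
    ⟨fun v _ => inv_mul_cancel_left₀ hs0 v, fun w _ => mul_inv_cancel_left₀ hs0 w⟩
    (fun v hv => ?_) (fun w hw => ?_)
  · simpa [zero_le_ofReal_mul_iff_of_neg hs, mem_slitPlane_iff_not_le_zero] using hv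
  · simpa [mem_slitPlane_iff_not_le_zero, ← zero_le_ofReal_mul_iff_of_neg hs, hs0] using hw

end Complex

/-- For `s < 0`, the map `z ↦ s((z+1)/(z−1))²` is a bijection from the open
unit disk onto `ℂ ∖ [0,∞)`. -/
theorem stmt_13 (s : ℝ) (hs : s < 0) :
    Set.InjOn (fun z : ℂ => (s : ℂ) * ((z + 1) / (z - 1)) ^ 2) (ball (0:ℂ) 1) ∧
    (fun z : ℂ => (s : ℂ) * ((z + 1) / (z - 1)) ^ 2) '' (ball (0:ℂ) 1) =
      (Complex.ofReal '' Ici (0:ℝ))ᶜ := by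
  have h := (Complex.bijOn_ofReal_mul_slitPlane hs).comp
    (Complex.bijOn_sq_re_neg_slitPlane.comp Complex.bijOn_cayley)
  rw [← Complex.ofReal_zero, ← Complex.image_ofReal_Ici] at h
  exact ⟨h.injOn, h.image_eq⟩
end

section
/- Let s < 0 be a real number and define C_s = 4·sup_{z ∈ U} (1 + |z|)/(|z − 1|² + |s|·|z + 1|²). Then C_s is finite and positive, and for every z in the open unit disk U with z ≠ 0, setting λ = s·((z + 1)/(z − 1))², one has 1 − |z| ≥ (1/(|s|^{1/2}·C_s)) · dist(λ, [0,∞)) / (|λ|^{1/2}·(1 + |λ|)). -/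
open Metric Set

/-!
The map `w = (z + 1) / (z - 1)` sends the unit disk to the left half-plane, with
`|Re w| = (1 - |z|^2) / |z - 1|^2`. Since `s < 0`, the point `s * (i Im w)^2` lies on `[0, ∞)`, so
`λ = s * w^2` is within `2 |s| |Re w| |w|` of `[0, ∞)`. Substituting `|w| = |z + 1| / |z - 1|` and
`1 + |λ| = (|z - 1|^2 + |s| |z + 1|^2) / |z - 1|^2`, the right-hand side is at most
`2 (1 - |z|^2) / (C_s (|z - 1|^2 + |s| |z + 1|^2))`, and the term of the supremum at `z` itself
bounds this by `(1 - |z|) / 2`.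
-/

noncomputable def cayleyWeight (c : ℝ) (z : ℂ) : ℝ :=
  (1 + ‖z‖) / (‖z - 1‖ ^ 2 + c * ‖z + 1‖ ^ 2)

lemma two_mul_min_le_norm_sub_one_sq_add {c : ℝ} (hc : 0 ≤ c) (z : ℂ) :
    2 * min 1 c ≤ ‖z - 1‖ ^ 2 + c * ‖z + 1‖ ^ 2 := by
  have hpar := parallelogram_law_with_norm ℝ z 1
  have h1 : min 1 c * ‖z - 1‖ ^ 2 ≤ ‖z - 1‖ ^ 2 :=
    mul_le_of_le_one_left (by positivity) (min_le_left _ _)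
  have h2 : min 1 c * ‖z + 1‖ ^ 2 ≤ c * ‖z + 1‖ ^ 2 := by gcongr; exact min_le_right _ _
  have hm : 0 ≤ min 1 c := le_min zero_le_one hc
  simp only [norm_one, one_pow] at hpar
  nlinarith [sq_nonneg ‖z‖]

lemma cayleyWeight_pos {c : ℝ} (hc : 0 < c) (z : ℂ) : 0 < cayleyWeight c z :=
  div_pos (by positivity)
    (lt_of_lt_of_le (by positivity) (two_mul_min_le_norm_sub_one_sq_add hc.le z))

lemma bddAbove_range_cayleyWeight {c : ℝ} (hc : 0 < c) :
    BddAbove (range fun z : ball (0 : ℂ) 1 => cayleyWeight c z) := by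
  refine ⟨2 / (2 * min 1 c), ?_⟩
  rintro _ ⟨z, rfl⟩
  have hz : ‖(z : ℂ)‖ < 1 := mem_ball_zero_iff.1 z.2
  exact div_le_div₀ zero_le_two (by linarith) (by positivity)
    (two_mul_min_le_norm_sub_one_sq_add hc.le z)

lemma re_cayley {z : ℂ} (hz : z ≠ 1) :
    ((z + 1) / (z - 1)).re = (‖z‖ ^ 2 - 1) / ‖z - 1‖ ^ 2 := by
  have hns : Complex.normSq (z - 1) ≠ 0 := by simpa [sub_eq_zero] using hz
  rw [Complex.sq_norm, Complex.sq_norm, Complex.div_re, Complex.normSq_apply z]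
  field_simp
  simp
  ring

lemma abs_re_cayley_div_one_add_mul_norm_sq {z : ℂ} (hz : ‖z‖ < 1) (c : ℝ) :
    |((z + 1) / (z - 1)).re| / (1 + c * ‖(z + 1) / (z - 1)‖ ^ 2) =
      (1 - ‖z‖ ^ 2) / (‖z - 1‖ ^ 2 + c * ‖z + 1‖ ^ 2) := by
  have hz1 : z ≠ 1 := by rintro rfl; simp at hz
  have hd : ‖z - 1‖ ≠ 0 := by simpa [sub_eq_zero] using hz1
  have hnum : 0 ≤ 1 - ‖z‖ ^ 2 := by nlinarith [norm_nonneg z]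
  rw [re_cayley hz1, abs_div, abs_sub_comm, abs_of_nonneg hnum, abs_of_nonneg (by positivity),
    norm_div]
  field_simp

lemma infDist_mul_sq_ofReal_Ici_le {s : ℝ} (hs : s ≤ 0) (w : ℂ) :
    infDist ((s : ℂ) * w ^ 2) (Complex.ofReal '' Ici 0) ≤ 2 * |s| * |w.re| * ‖w‖ := by
  -- The witness `s * (i * Im w)^2 = -s * (Im w)^2 ≥ 0` differs from `s * w^2`
  -- by `s * Re w * (w + i * Im w)`.
  have hmem : ((-s * w.im ^ 2 : ℝ) : ℂ) ∈ Complex.ofReal '' Ici 0 :=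
    ⟨_, mem_Ici.2 (by nlinarith [sq_nonneg w.im]), rfl⟩
  have hfactor :
      (s : ℂ) * w ^ 2 - ((-s * w.im ^ 2 : ℝ) : ℂ) = s * w.re * (w + w.im * Complex.I) := by
    push_cast
    linear_combination (-(s : ℂ) * (w + w.im * Complex.I)) * Complex.re_add_im w +
      (s * w.im ^ 2) * Complex.I_sq
  have him : ‖(w.im : ℂ) * Complex.I‖ ≤ ‖w‖ := by
    simpa using Complex.abs_im_le_norm w
  calc infDist _ _ ≤ dist _ _ := infDist_le_dist_of_mem hmem
    _ = |s| * |w.re| * ‖w + w.im * Complex.I‖ := by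
      rw [dist_eq_norm, hfactor, norm_mul, norm_mul, Complex.norm_real, Complex.norm_real,
        Real.norm_eq_abs, Real.norm_eq_abs]
    _ ≤ |s| * |w.re| * (‖w‖ + ‖w‖) := by gcongr; exact (norm_add_le _ _).trans (by gcongr)
    _ = 2 * |s| * |w.re| * ‖w‖ := by ring

lemma infDist_mul_sq_div_le {s : ℝ} (hs : s < 0) {w : ℂ} (hw : w ≠ 0) :
    infDist ((s : ℂ) * w ^ 2) (Complex.ofReal '' Ici 0) /
        (√‖(s : ℂ) * w ^ 2‖ * (1 + ‖(s : ℂ) * w ^ 2‖)) ≤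
      2 * √|s| * (|w.re| / (1 + |s| * ‖w‖ ^ 2)) := by
  have hnorm : ‖(s : ℂ) * w ^ 2‖ = |s| * ‖w‖ ^ 2 := by simp
  have hsq : √|s| ≠ 0 := (Real.sqrt_pos.2 (abs_pos.2 hs.ne)).ne'
  have hw' : ‖w‖ ≠ 0 := norm_ne_zero_iff.2 hw
  rw [hnorm, Real.sqrt_mul (abs_nonneg s), Real.sqrt_sq (norm_nonneg w)]
  calc _ ≤ 2 * |s| * |w.re| * ‖w‖ / (√|s| * ‖w‖ * (1 + |s| * ‖w‖ ^ 2)) :=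
        div_le_div_of_nonneg_right (infDist_mul_sq_ofReal_Ici_le hs.le w) (by positivity)
    _ = _ := by
      field_simp
      rw [Real.sq_sqrt (abs_nonneg s), mul_comm]

lemma mul_infDist_div_le_one_sub_norm {s : ℝ} (hs : s < 0) {z : ℂ} (hz : ‖z‖ < 1) {M : ℝ}
    (hM : cayleyWeight |s| z ≤ M) :
    1 / (√|s| * (4 * M)) *
        (infDist ((s : ℂ) * ((z + 1) / (z - 1)) ^ 2) (Complex.ofReal '' Ici 0) /
          (√‖(s : ℂ) * ((z + 1) / (z - 1)) ^ 2‖ *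
            (1 + ‖(s : ℂ) * ((z + 1) / (z - 1)) ^ 2‖)))
      ≤ 1 - ‖z‖ := by
  have hc : 0 < |s| := abs_pos.2 hs.ne
  have hw : (z + 1) / (z - 1) ≠ 0 := by
    refine div_ne_zero ?_ ?_ <;> rintro h
    · rw [add_eq_zero_iff_eq_neg.1 h] at hz; simp at hz
    · rw [sub_eq_zero.1 h] at hz; simp at hz
  have hQ : 0 < ‖z - 1‖ ^ 2 + |s| * ‖z + 1‖ ^ 2 :=
    lt_of_lt_of_le (by positivity) (two_mul_min_le_norm_sub_one_sq_add hc.le z)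
  have hMQ : 1 + ‖z‖ ≤ M * (‖z - 1‖ ^ 2 + |s| * ‖z + 1‖ ^ 2) :=
    (div_le_iff₀ hQ).1 hM
  have hMpos : 0 < M := (cayleyWeight_pos hc z).trans_le hM
  have hbound := infDist_mul_sq_div_le hs hw
  rw [abs_re_cayley_div_one_add_mul_norm_sq hz] at hbound
  calc _ ≤ 1 / (√|s| * (4 * M)) *
        (2 * √|s| * ((1 - ‖z‖ ^ 2) / (‖z - 1‖ ^ 2 + |s| * ‖z + 1‖ ^ 2))) := by gcongr
    _ = (1 - ‖z‖) * (1 + ‖z‖) / (2 * (M * (‖z - 1‖ ^ 2 + |s| * ‖z + 1‖ ^ 2))) := by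
      field_simp; ring
    _ ≤ 1 - ‖z‖ := by
      rw [div_le_iff₀ (by positivity)]
      nlinarith [norm_nonneg z]

/-- The constant `C_s` of Theorem 5.2 is finite and positive, and yields the
lower bound `1 − |z| ≥ dist(λ,[0,∞)) / (√|s| C_s |λ|^{1/2} (1+|λ|))`. -/
theorem stmt_14 (s : ℝ) (hs : s < 0) :
    BddAbove (Set.range (fun z : ball (0:ℂ) 1 =>
      (1 + ‖(z : ℂ)‖) / (‖(z : ℂ) - 1‖^2 + |s| * ‖(z : ℂ) + 1‖^2))) ∧
    0 < 4 * ⨆ z : ball (0:ℂ) 1,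
      (1 + ‖(z : ℂ)‖) / (‖(z : ℂ) - 1‖^2 + |s| * ‖(z : ℂ) + 1‖^2) ∧
    ∀ z ∈ ball (0:ℂ) 1, z ≠ 0 →
      1 - ‖z‖ ≥
        (1 / (Real.sqrt |s| * (4 * ⨆ z' : ball (0:ℂ) 1,
          (1 + ‖(z' : ℂ)‖) / (‖(z' : ℂ) - 1‖^2 + |s| * ‖(z' : ℂ) + 1‖^2)))) *
        (Metric.infDist ((s : ℂ) * ((z + 1) / (z - 1)) ^ 2) (Complex.ofReal '' Ici (0:ℝ)) /
          (Real.sqrt ‖(s : ℂ) * ((z + 1) / (z - 1)) ^ 2‖ *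
            (1 + ‖(s : ℂ) * ((z + 1) / (z - 1)) ^ 2‖))) := by
  have hc : 0 < |s| := abs_pos.2 hs.ne
  have hbdd := bddAbove_range_cayleyWeight hc
  refine ⟨hbdd, ?_, fun z hz _ => mul_infDist_div_le_one_sub_norm hs (mem_ball_zero_iff.1 hz)
    (le_ciSup hbdd ⟨z, hz⟩)⟩
  exact mul_pos four_pos
    ((cayleyWeight_pos hc 0).trans_le (le_ciSup hbdd ⟨0, mem_ball_self one_pos⟩))
end

section
/- Let A be the bounded linear operator on ℓ²(ℤ) defined by (Au)(k) = u(k−1) + u(k+1). Then the spectrum of A equals the segment [−2,2] ⊂ ℂ, i.e. σ(A) = {x + 0i : −2 ≤ x ≤ 2}. -/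
/-!
`A` is the sum of the shifts by `1` and `-1`, which are isometries adjoint to each other, so `A`
is self-adjoint with `‖A‖ ≤ 2` and its spectrum lies in `[-2, 2]`. Conversely, write `x ∈ [-2, 2]`
as `a + a⁻¹` with `|a| = 1`; the plane wave `k ↦ a ^ k` solves `A f = x f` pointwise, so its
truncation `u` to `[0, n)` satisfies `‖u‖ = √n` while `(x - A) u` lives on the four edge points
`-1, 0, n - 1, n` and has norm at most `4`. Hence `x - A` is not bounded below, so `x` lies in the
spectrum.
-/

open Metric Set

open scoped InnerProductSpace lp

namespace lp

variable {G E : Type*} [AddGroup G] [NormedAddCommGroup E]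

theorem memℓp_comp_addRight (u : ℓ²(G, E)) (g : G) : Memℓp (fun i => u (i + g)) 2 := by
  have hu : Summable fun i => ‖u i‖ ^ (2 : ENNReal).toReal :=
    (memℓp_gen_iff (by norm_num)).mp (lp.memℓp u)
  have hshift := (Equiv.addRight g).summable_iff.mpr hu
  exact memℓp_gen hshift

def shift (g : G) (u : ℓ²(G, E)) : ℓ²(G, E) := ⟨fun i => u (i + g), memℓp_comp_addRight u g⟩

@[simp] theorem shift_apply (g : G) (u : ℓ²(G, E)) (i : G) : shift g u i = u (i + g) := rfl

theorem norm_shift (g : G) (u : ℓ²(G, E)) : ‖shift g u‖ = ‖u‖ := by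
  rw [lp.norm_eq_tsum_rpow (by norm_num), lp.norm_eq_tsum_rpow (by norm_num) u]
  congr 1
  exact (Equiv.addRight g).tsum_eq fun i => ‖u i‖ ^ (2 : ENNReal).toReal

theorem inner_shift {𝕜 : Type*} [RCLike 𝕜] [InnerProductSpace 𝕜 E] (g : G) (u v : ℓ²(G, E)) :
    ⟪shift g u, v⟫_𝕜 = ⟪u, shift (-g) v⟫_𝕜 := by
  simp only [lp.inner_eq_tsum, shift_apply]
  rw [← (Equiv.addRight g).tsum_eq fun i => ⟪u i, v (i + -g)⟫_𝕜]
  simp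

end lp

theorem IsUnit.exists_norm_le_mul_norm_apply {𝕜 E : Type*} [NontriviallyNormedField 𝕜]
    [NormedAddCommGroup E] [NormedSpace 𝕜 E] {T : E →L[𝕜] E} (hT : IsUnit T) :
    ∃ C, ∀ u, ‖u‖ ≤ C * ‖T u‖ := by
  obtain ⟨U, rfl⟩ := hT
  refine ⟨‖(↑U⁻¹ : E →L[𝕜] E)‖, fun u => ?_⟩
  calc ‖u‖ = ‖(↑U⁻¹ : E →L[𝕜] E) ((U : E →L[𝕜] E) u)‖ := by
        rw [← mul_apply_eq_comp, Units.inv_mul, one_apply_eq_self]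
    _ ≤ _ := ContinuousLinearMap.le_opNorm _ _

theorem IsSelfAdjoint.spectrum_subset_Icc {A : Type*} [CStarAlgebra A] {a : A}
    (ha : IsSelfAdjoint a) : spectrum ℂ a ⊆ Complex.ofReal '' Icc (-‖a‖) ‖a‖ := by
  nontriviality A
  intro z hz
  have hre := ha.mem_spectrum_eq_re hz
  have hnorm := spectrum.norm_le_norm_of_mem hz
  rw [hre, Complex.norm_real, Real.norm_eq_abs] at hnorm
  exact ⟨z.re, abs_le.mp hnorm, hre.symm⟩

theorem Complex.exists_norm_eq_one_add_inv_eq {x : ℝ} (hx : |x| ≤ 2) :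
    ∃ a : ℂ, ‖a‖ = 1 ∧ a + a⁻¹ = x := by
  set θ := Real.arccos (x / 2)
  have hcos : Real.cos θ = x / 2 :=
    Real.cos_arccos (by linarith [abs_le.mp hx]) (by linarith [abs_le.mp hx])
  refine ⟨exp (θ * I), norm_exp_ofReal_mul_I θ, ?_⟩
  rw [← exp_neg, ← neg_mul, ← two_cos, ← ofReal_cos, hcos]
  push_cast
  ring

namespace FreeSchrodinger

section Truncation

variable {E : Type*} [NormedAddCommGroup E]

noncomputable def truncation (f : ℤ → E) (n : ℕ) : ℓ²(ℤ, E) :=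
  ∑ k ∈ Finset.Ico (0 : ℤ) n, lp.single 2 k (f k)

theorem truncation_apply (f : ℤ → E) (n : ℕ) (k : ℤ) :
    truncation f n k = if 0 ≤ k ∧ k < n then f k else 0 := by
  simp only [truncation, lp.coeFn_sum, lp.coeFn_single, Finset.sum_apply, Finset.sum_pi_single,
    Finset.mem_Ico]

theorem norm_truncation_sq (f : ℤ → E) (n : ℕ) :
    ‖truncation f n‖ ^ 2 = ∑ k ∈ Finset.Ico (0 : ℤ) n, ‖f k‖ ^ 2 := by
  simpa [truncation] using lp.norm_sum_single (p := 2) (by norm_num) f (Finset.Ico (0 : ℤ) n)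

end Truncation

section Operator

variable {A : ℓ²(ℤ, ℂ) →L[ℂ] ℓ²(ℤ, ℂ)} (hA : ∀ u : ℓ²(ℤ, ℂ), ∀ k : ℤ, A u k = u (k - 1) + u (k + 1))
include hA

local notation "δ" => lp.single (E := fun _ : ℤ => ℂ) 2

theorem apply_eq_shift_add_shift (u : ℓ²(ℤ, ℂ)) : A u = lp.shift (-1) u + lp.shift 1 u := by
  ext k
  simp [hA, sub_eq_add_neg]

theorem isSelfAdjoint_of_apply_eq : IsSelfAdjoint A := by
  rw [ContinuousLinearMap.isSelfAdjoint_iff_isSymmetric]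
  intro u v
  simp only [ContinuousLinearMap.coe_coe, apply_eq_shift_add_shift hA, inner_add_left,
    inner_add_right, lp.inner_shift, neg_neg]
  exact add_comm _ _

theorem norm_le_two_of_apply_eq : ‖A‖ ≤ 2 := by
  refine A.opNorm_le_bound zero_le_two fun u => ?_
  calc ‖A u‖ ≤ ‖lp.shift (-1) u‖ + ‖lp.shift 1 u‖ := by
        rw [apply_eq_shift_add_shift hA]; exact norm_add_le _ _
    _ = 2 * ‖u‖ := by rw [lp.norm_shift, lp.norm_shift, two_mul]

theorem smul_truncation_sub_apply_truncation {x : ℂ} {f : ℤ → ℂ}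
    (hf : ∀ k, x * f k = f (k - 1) + f (k + 1)) (n : ℕ) :
    x • truncation f n - A (truncation f n) =
      δ 0 (f (-1)) - δ n (f (n - 1)) + δ (n - 1) (f n) - δ (-1) (f 0) := by
  ext k
  simp only [lp.coeFn_sub, lp.coeFn_add, lp.coeFn_smul, Pi.sub_apply, Pi.add_apply,
    Pi.smul_apply, smul_eq_mul, hA, truncation_apply, lp.coeFn_single, Pi.single_apply]
  have hk := hf k
  -- away from the edges of `[0, n)` the residual cancels by `hk`
  obtain rfl | rfl | hn : n = 0 ∨ n = 1 ∨ 2 ≤ n := by omega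
  all_goals split_ifs <;> first
    | omega
    | (subst_vars; norm_num at hk ⊢ <;> linear_combination hk)

theorem add_inv_mem_spectrum_of_apply_eq {a : ℂ} (ha : ‖a‖ = 1) : a + a⁻¹ ∈ spectrum ℂ A := by
  have ha₀ : a ≠ 0 := norm_ne_zero_iff.mp (ha ▸ one_ne_zero)
  have hwave (k : ℤ) : (a + a⁻¹) * a ^ k = a ^ (k - 1) + a ^ (k + 1) := by
    rw [zpow_sub_one₀ ha₀, zpow_add_one₀ ha₀]; ring
  have hnorm (k : ℤ) : ‖a ^ k‖ = 1 := by rw [norm_zpow, ha, one_zpow]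
  rw [spectrum.mem_iff]
  intro hunit
  obtain ⟨C, hC⟩ := hunit.exists_norm_le_mul_norm_apply
  obtain ⟨n, hn⟩ := exists_nat_gt (16 * C ^ 2)
  set u := truncation (a ^ ·) n
  have hu : ‖u‖ ^ 2 = n := by simp [u, norm_truncation_sq, hnorm]
  have hres : ‖(algebraMap ℂ _ (a + a⁻¹) - A) u‖ ≤ 4 := by
    rw [sub_apply, Algebra.algebraMap_eq_smul_one, smul_apply, one_apply_eq_self,
      smul_truncation_sub_apply_truncation hA hwave]
    refine (norm_sub_le_of_le (norm_add_le_of_le (norm_sub_le _ _) le_rfl) le_rfl).trans ?_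
    norm_num [lp.norm_single, hnorm, ha]
  have hbound : ‖u‖ ≤ |C| * 4 := calc
    ‖u‖ ≤ C * ‖(algebraMap ℂ _ (a + a⁻¹) - A) u‖ := hC u
    _ ≤ |C| * ‖(algebraMap ℂ _ (a + a⁻¹) - A) u‖ := by gcongr; exact le_abs_self C
    _ ≤ |C| * 4 := by gcongr
  have hsq := pow_le_pow_left₀ (norm_nonneg u) hbound 2
  rw [hu, mul_pow, sq_abs] at hsq
  linarith

end Operator

end FreeSchrodinger

open FreeSchrodinger

/-- The spectrum of the discrete free Schrödinger operator on `ℓ²(ℤ)`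
is the segment `[-2,2]`. -/
theorem stmt_15 (A : lp (fun _ : ℤ => ℂ) 2 →L[ℂ] lp (fun _ : ℤ => ℂ) 2)
    (hA : ∀ u : lp (fun _ : ℤ => ℂ) 2, ∀ k : ℤ, (A u) k = u (k - 1) + u (k + 1)) :
    spectrum ℂ A = Complex.ofReal '' Icc (-2:ℝ) 2 := by
  refine (isSelfAdjoint_of_apply_eq hA).spectrum_subset_Icc.trans ?_ |>.antisymm ?_
  · have hnorm := norm_le_two_of_apply_eq hA
    exact image_mono (Icc_subset_Icc (neg_le_neg hnorm) hnorm)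
  · rintro _ ⟨x, hx, rfl⟩
    obtain ⟨a, ha, hax⟩ := Complex.exists_norm_eq_one_add_inv_eq (abs_le.mpr hx)
    rw [← hax]
    exact add_inv_mem_spectrum_of_apply_eq hA ha
end

section
/- Let A be the bounded linear operator on ℓ²(ℤ) defined by (Au)(k) = u(k−1) + u(k+1), and let δ₀ ∈ ℓ²(ℤ) be the sequence equal to 1 at index 0 and 0 elsewhere. Let (α_j)_{j∈ℤ} be a complex sequence with Σ_{j∈ℤ} |α_j|² < ∞, and let B = A + M where (Mu) = (Σ_{j∈ℤ} α_j·u(j))·δ₀. For z in the open unit disk with z ≠ 0, let u_z ∈ ℓ²(ℤ) be given by u_z(k) = z^{|k|}. Then B u_z = (z + z⁻¹)·u_z if and only if −1 + α₀·z + (α₁ + α₋₁ + 1)·z² + Σ_{j≥3} (α_{j−1} + α_{1−j})·z^j = 0. -/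
open Metric Set

/-!
Since `z^{|k-1|} + z^{|k+1|} = (z + z⁻¹) z^{|k|}` for every `k ≠ 0` and `M` only moves mass to the
origin, the eigenvalue equation `B u_z = (z + z⁻¹) u_z` reduces to its coordinate at `0`, which reads
`2z + S = z + z⁻¹` with `S = ∑ α_j z^{|j|}` (absolutely convergent, as `α` and `u_z` are in `ℓ²`).
Multiplying by `z`, this is `z S + z² - 1 = 0`, and grouping the terms of `z S` by the exponent
`|j| + 1` turns `z S + z² - 1` into the power series of the statement.
-/

theorem Summable.mul_of_summable_norm_sq {ι R : Type*} [NormedRing R] [CompleteSpace R]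
    {f g : ι → R} (hf : Summable fun i => ‖f i‖ ^ 2) (hg : Summable fun i => ‖g i‖ ^ 2) :
    Summable fun i => f i * g i :=
  .of_norm_bounded (hf.add hg) fun i =>
    (norm_mul_le _ _).trans <| by
      nlinarith [two_mul_le_add_sq ‖f i‖ ‖g i‖, norm_nonneg (f i), norm_nonneg (g i)]

theorem lp.summable_norm_sq {ι : Type*} {E : ι → Type*} [∀ i, NormedAddCommGroup (E i)]
    (u : lp E 2) : Summable fun i => ‖u i‖ ^ 2 := by
  simpa using (lp.hasSum_norm (by norm_num) u).summable

theorem pow_natAbs_sub_one_add_pow_natAbs_add_one {K : Type*} [Field K] {z : K} (hz : z ≠ 0)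
    {k : ℤ} (hk : k ≠ 0) :
    z ^ (k - 1).natAbs + z ^ (k + 1).natAbs = (z + z⁻¹) * z ^ k.natAbs := by
  obtain ⟨m, hm⟩ : ∃ m : ℕ, k.natAbs = m + 1 := ⟨k.natAbs - 1, by omega⟩
  rcases hk.lt_or_gt with h | h
  · rw [show (k - 1).natAbs = m + 2 by omega, show (k + 1).natAbs = m by omega, hm]
    field_simp
    ring
  · rw [show (k - 1).natAbs = m by omega, show (k + 1).natAbs = m + 2 by omega, hm]
    field_simp
    ring

/-- The coefficient of `z ^ n`, `n ≥ 2`, in `z * ∑ α j * z ^ |j|` is `α (n - 1) + α (1 - n)`. -/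
theorem HasSum.fold_natAbs_tail {K : Type*} [Field K] [TopologicalSpace K] [IsTopologicalRing K]
    {α : ℤ → K} {z S : K} (hS : HasSum (fun j : ℤ => α j * z ^ j.natAbs) S) :
    HasSum (fun n : ℕ => if 3 ≤ n then (α ((n : ℤ) - 1) + α (1 - (n : ℤ))) * z ^ n else 0)
      (z * S - α 0 * z - (α 1 + α (-1)) * z ^ 2) := by
  have hpair : HasSum (fun n : ℕ => (α n + α (-n)) * z ^ (n + 1)) (z * (S + α 0)) := by
    have := hS.nat_add_neg.mul_left z
    simp only [Int.natAbs_zero, pow_zero, mul_one] at this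
    exact this.congr_fun fun n => by simp only [Int.natAbs_neg, Int.natAbs_natCast]; ring
  rw [← hasSum_nat_add_iff' 2] at hpair
  rw [← hasSum_nat_add_iff' 3]
  convert hpair using 1
  · funext n
    rw [if_pos (by omega)]
    push_cast
    ring_nf
  · norm_num [Finset.sum_range_succ]
    ring

theorem add_apply_eq_smul_iff_at_zero (A M : lp (fun _ : ℤ => ℂ) 2 →L[ℂ] lp (fun _ : ℤ => ℂ) 2)
    (hA : ∀ u : lp (fun _ : ℤ => ℂ) 2, ∀ k : ℤ, (A u) k = u (k - 1) + u (k + 1))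
    (δ₀ : lp (fun _ : ℤ => ℂ) 2)
    (hδ₀ : ∀ k : ℤ, δ₀ k = if k = 0 then 1 else 0)
    (α : ℤ → ℂ)
    (hM : ∀ u : lp (fun _ : ℤ => ℂ) 2, ∀ k : ℤ,
      (M u) k = (∑' j : ℤ, α j * u j) * δ₀ k)
    {z : ℂ} (hz0 : z ≠ 0)
    (u : lp (fun _ : ℤ => ℂ) 2) (hu : ∀ k : ℤ, u k = z ^ k.natAbs) :
    (A + M) u = (z + z⁻¹) • u ↔ z + z + ∑' j : ℤ, α j * u j = z + z⁻¹ := by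
  have happly : ∀ k, ((A + M) u) k = u (k - 1) + u (k + 1) + (∑' j : ℤ, α j * u j) * δ₀ k :=
    fun k => by rw [add_apply, lp.coeFn_add, Pi.add_apply, hA, hM]
  rw [lp.ext_iff, funext_iff]
  simp only [happly, hδ₀, lp.coeFn_smul, Pi.smul_apply, smul_eq_mul, hu]
  constructor
  · intro h
    simpa using h 0
  · intro h k
    rcases eq_or_ne k 0 with rfl | hk
    · simpa using h
    · simpa [hk] using pow_natAbs_sub_one_add_pow_natAbs_add_one hz0 hk

theorem stmt_16_general (A M : lp (fun _ : ℤ => ℂ) 2 →L[ℂ] lp (fun _ : ℤ => ℂ) 2)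
    (hA : ∀ u : lp (fun _ : ℤ => ℂ) 2, ∀ k : ℤ, (A u) k = u (k - 1) + u (k + 1))
    (δ₀ : lp (fun _ : ℤ => ℂ) 2)
    (hδ₀ : ∀ k : ℤ, δ₀ k = if k = 0 then 1 else 0)
    (α : ℤ → ℂ) (hα : Summable (fun j : ℤ => ‖α j‖ ^ 2))
    (hM : ∀ u : lp (fun _ : ℤ => ℂ) 2, ∀ k : ℤ,
      (M u) k = (∑' j : ℤ, α j * u j) * δ₀ k)
    (z : ℂ) (hz0 : z ≠ 0)
    (u : lp (fun _ : ℤ => ℂ) 2) (hu : ∀ k : ℤ, u k = z ^ k.natAbs) :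
    (A + M) u = (z + z⁻¹) • u ↔
      -1 + α 0 * z + (α 1 + α (-1) + 1) * z ^ 2 +
        (∑' j : ℕ, if 3 ≤ j then (α ((j : ℤ) - 1) + α (1 - (j : ℤ))) * z ^ j else 0) = 0 := by
  rw [add_apply_eq_smul_iff_at_zero A M hA δ₀ hδ₀ α hM hz0 u hu]
  set S := ∑' j : ℤ, α j * u j
  have hS : HasSum (fun j : ℤ => α j * z ^ j.natAbs) S :=
    (hα.mul_of_summable_norm_sq (lp.summable_norm_sq u)).hasSum.congr_fun fun j => by rw [hu]
  have hφ : (z + z + S - (z + z⁻¹)) * z = -1 + α 0 * z + (α 1 + α (-1) + 1) * z ^ 2 +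
      (z * S - α 0 * z - (α 1 + α (-1)) * z ^ 2) := by
    field_simp
    ring
  rw [(HasSum.fold_natAbs_tail hS).tsum_eq, ← hφ, mul_eq_zero_iff_right hz0, sub_eq_zero]

/-- `u_z(k) = z^{|k|}` is an eigenvector of `B = A + M` for the eigenvalue
`z + z⁻¹` if and only if `φ(z) = 0`, where `φ` is the power series built from
the coefficients of the rank-one perturbation `M`. -/
theorem stmt_16 (A M : lp (fun _ : ℤ => ℂ) 2 →L[ℂ] lp (fun _ : ℤ => ℂ) 2)
    (hA : ∀ u : lp (fun _ : ℤ => ℂ) 2, ∀ k : ℤ, (A u) k = u (k - 1) + u (k + 1))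
    (δ₀ : lp (fun _ : ℤ => ℂ) 2)
    (hδ₀ : ∀ k : ℤ, δ₀ k = if k = 0 then 1 else 0)
    (α : ℤ → ℂ) (hα : Summable (fun j : ℤ => ‖α j‖ ^ 2))
    (hM : ∀ u : lp (fun _ : ℤ => ℂ) 2, ∀ k : ℤ,
      (M u) k = (∑' j : ℤ, α j * u j) * δ₀ k)
    (z : ℂ) (hz : z ∈ ball (0:ℂ) 1) (hz0 : z ≠ 0)
    (u : lp (fun _ : ℤ => ℂ) 2) (hu : ∀ k : ℤ, u k = z ^ k.natAbs) :
    (A + M) u = (z + z⁻¹) • u ↔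
      -1 + α 0 * z + (α 1 + α (-1) + 1) * z ^ 2 +
        (∑' j : ℕ, if 3 ≤ j then (α ((j : ℤ) - 1) + α (1 - (j : ℤ))) * z ^ j else 0) = 0 :=
  stmt_16_general A M hA δ₀ hδ₀ α hα hM z hz0 u hu
end

section
/- Let (z_k)_{k∈ℕ} be a sequence in the open unit disk U with z_k ≠ 0 for all k, and set λ_k = z_k + z_k⁻¹. Then Σ_k dist(λ_k, [−2,2]) / |λ_k² − 4|^{1/2} < ∞ if and only if Σ_k (1 − |z_k|) < ∞. -/
/-!
The segment `[-2, 2]` is the image of the unit circle under the Joukowski map `J w = w + w⁻¹`,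
and for `‖w‖ = 1` we have `J z - J w = (z - w) (z w - 1) / (z w)`, while
`√‖(J z)² - 4‖ = ‖z - z⁻¹‖`. Both factors `‖z - w‖` and `‖z w - 1‖` are at least `1 - ‖z‖`,
and `z - z⁻¹ = (z - w) + (z w - 1) / z`; this gives `dist (J z) [-2, 2] ≥ (1 - ‖z‖) ‖z - z⁻¹‖ / 2`.
The radial projection `w = z / ‖z‖` has `‖z - w‖ = 1 - ‖z‖` and gives the matching upper bound
`2 (1 - ‖z‖) ‖z - z⁻¹‖`, so the two series are termwise comparable.
-/

open Metric Set

namespace Complex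

theorem add_inv_sub_add_inv {z w : ℂ} (hz : z ≠ 0) (hw : w ≠ 0) :
    z + z⁻¹ - (w + w⁻¹) = (z - w) * (z * w - 1) / (z * w) := by
  field_simp
  ring

theorem sqrt_norm_add_inv_sq_sub_four {z : ℂ} (hz : z ≠ 0) :
    √‖(z + z⁻¹) ^ 2 - 4‖ = ‖z - z⁻¹‖ := by
  rw [show (z + z⁻¹) ^ 2 - 4 = (z - z⁻¹) ^ 2 by field_simp; ring, norm_pow,
    Real.sqrt_sq (norm_nonneg _)]

theorem norm_sub_inv_eq {z : ℂ} (hz : z ≠ 0) : ‖z - z⁻¹‖ = ‖z ^ 2 - 1‖ / ‖z‖ := by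
  rw [show z - z⁻¹ = (z ^ 2 - 1) / z by field_simp, norm_div]

theorem one_sub_norm_sq_le_norm_sq_sub_one (z : ℂ) : 1 - ‖z‖ ^ 2 ≤ ‖z ^ 2 - 1‖ := by
  rw [← norm_pow, norm_sub_rev, ← norm_one (α := ℂ)]
  exact norm_sub_norm_le _ _

theorem norm_sub_inv_pos {z : ℂ} (hz : z ≠ 0) (h1 : ‖z‖ < 1) : 0 < ‖z - z⁻¹‖ := by
  have hr : 0 < ‖z‖ := norm_pos_iff.mpr hz
  rw [norm_sub_inv_eq hz]
  have : ‖z‖ ^ 2 < 1 := by nlinarith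
  exact div_pos (by linarith [one_sub_norm_sq_le_norm_sq_sub_one z]) hr

theorem dist_add_inv_of_norm_eq_one {z w : ℂ} (hz : z ≠ 0) (hw : ‖w‖ = 1) :
    dist (z + z⁻¹) (w + w⁻¹) = ‖z - w‖ * ‖z * w - 1‖ / ‖z‖ := by
  rw [dist_eq_norm, add_inv_sub_add_inv hz (norm_ne_zero_iff.mp (hw ▸ one_ne_zero)), norm_div,
    norm_mul, norm_mul, hw, mul_one]

theorem ofReal_image_Icc_eq_image_sphere :
    ofReal '' Icc (-2) 2 = (fun w : ℂ => w + w⁻¹) '' sphere 0 1 := by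
  ext u
  constructor
  · rintro ⟨x, ⟨hx₁, hx₂⟩, rfl⟩
    refine ⟨exp (Real.arccos (x / 2) * I), by simp, ?_⟩
    dsimp only
    rw [← exp_neg, ← neg_mul, ← two_cos, ← ofReal_cos, Real.cos_arccos (by linarith) (by linarith)]
    push_cast
    ring
  · rintro ⟨w, hw, rfl⟩
    rw [mem_sphere_zero_iff_norm] at hw
    refine ⟨2 * w.re, ?_, by simp only [inv_eq_conj hw, add_conj]⟩
    have := abs_le.mp (hw ▸ abs_re_le_norm w)
    constructor <;> linarith

theorem one_sub_norm_mul_norm_sub_inv_le {z w : ℂ} (hz : z ≠ 0) (h1 : ‖z‖ < 1) (hw : ‖w‖ = 1) :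
    (1 - ‖z‖) * ‖z - z⁻¹‖ ≤ 2 * dist (z + z⁻¹) (w + w⁻¹) := by
  have hr : 0 < ‖z‖ := norm_pos_iff.mpr hz
  have hA : 1 - ‖z‖ ≤ ‖z - w‖ := by simpa [hw, norm_sub_rev w] using norm_sub_norm_le w z
  have hB : 1 - ‖z‖ ≤ ‖z * w - 1‖ := by
    simpa [norm_mul, hw, norm_sub_rev (z * w)] using norm_sub_norm_le (1 : ℂ) (z * w)
  have hsplit : ‖z‖ * ‖z - z⁻¹‖ ≤ ‖z‖ * ‖z - w‖ + ‖z * w - 1‖ := by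
    have : z * (z - z⁻¹) = z * (z - w) + (z * w - 1) := by field_simp; ring
    rw [← norm_mul, ← norm_mul, this]
    exact norm_add_le _ _
  have hAB := mul_nonneg (norm_nonneg (z - w)) (norm_nonneg (z * w - 1))
  rw [dist_add_inv_of_norm_eq_one hz hw, mul_div_assoc', le_div_iff₀ hr]
  nlinarith [mul_le_mul_of_nonneg_left hsplit (by linarith : 0 ≤ 1 - ‖z‖),
    mul_le_mul_of_nonneg_right hA (norm_nonneg (z * w - 1)),
    mul_le_mul_of_nonneg_right hB (mul_nonneg hr.le (norm_nonneg (z - w))),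
    mul_le_mul_of_nonneg_right h1.le hAB]

theorem dist_add_inv_le_of_norm_mul_eq {z w : ℂ} (hz : z ≠ 0) (h1 : ‖z‖ < 1) (hw : ‖w‖ = 1)
    (hzw : ‖z‖ * w = z) : dist (z + z⁻¹) (w + w⁻¹) ≤ 2 * (1 - ‖z‖) * ‖z - z⁻¹‖ := by
  have hr : 0 < ‖z‖ := norm_pos_iff.mpr hz
  have hA : ‖z - w‖ = 1 - ‖z‖ := by
    have : z - w = ((‖z‖ - 1 : ℝ) : ℂ) * w := by push_cast; linear_combination -hzw
    rw [this, norm_mul, hw, mul_one, norm_real, Real.norm_of_nonpos (by linarith), neg_sub]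
  have hB : ‖z * w - 1‖ ≤ 2 * ‖z ^ 2 - 1‖ := by
    have : z * w - 1 = (z ^ 2 - 1) + (1 - ‖z‖) * (z * w) := by
      linear_combination z * hzw
    have hsplit : ‖z * w - 1‖ ≤ ‖z ^ 2 - 1‖ + (1 - ‖z‖) * ‖z‖ := by
      rw [this]
      refine (norm_add_le _ _).trans_eq ?_
      rw [norm_mul, norm_mul, hw, mul_one, ← ofReal_one, ← ofReal_sub, norm_real,
        Real.norm_of_nonneg (by linarith)]
    nlinarith [one_sub_norm_sq_le_norm_sq_sub_one z]
  rw [dist_add_inv_of_norm_eq_one hz hw, hA, norm_sub_inv_eq hz, div_le_iff₀ hr]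
  calc (1 - ‖z‖) * ‖z * w - 1‖ ≤ (1 - ‖z‖) * (2 * ‖z ^ 2 - 1‖) := by gcongr
    _ = 2 * (1 - ‖z‖) * (‖z ^ 2 - 1‖ / ‖z‖) * ‖z‖ := by field_simp

theorem one_sub_norm_le_two_mul_infDist_div {z : ℂ} (hz : z ≠ 0) (h1 : ‖z‖ < 1) :
    1 - ‖z‖ ≤ 2 * (infDist (z + z⁻¹) (ofReal '' Icc (-2) 2) / √‖(z + z⁻¹) ^ 2 - 4‖) := by
  rw [sqrt_norm_add_inv_sq_sub_four hz, mul_div_assoc', le_div_iff₀ (norm_sub_inv_pos hz h1),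
    ← div_le_iff₀' two_pos, le_infDist ((nonempty_Icc.mpr (by norm_num)).image _),
    ofReal_image_Icc_eq_image_sphere]
  rintro _ ⟨w, hw, rfl⟩
  rw [div_le_iff₀' two_pos]
  exact one_sub_norm_mul_norm_sub_inv_le hz h1 (mem_sphere_zero_iff_norm.mp hw)

theorem infDist_div_le_two_mul_one_sub_norm {z : ℂ} (hz : z ≠ 0) (h1 : ‖z‖ < 1) :
    infDist (z + z⁻¹) (ofReal '' Icc (-2) 2) / √‖(z + z⁻¹) ^ 2 - 4‖ ≤ 2 * (1 - ‖z‖) := by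
  have hr : 0 < ‖z‖ := norm_pos_iff.mpr hz
  rw [sqrt_norm_add_inv_sq_sub_four hz, div_le_iff₀ (norm_sub_inv_pos hz h1)]
  have hw : ‖z / ‖z‖‖ = 1 := by
    rw [norm_div, norm_real, Real.norm_of_nonneg hr.le, div_self hr.ne']
  refine (infDist_le_dist_of_mem ?_).trans
    (dist_add_inv_le_of_norm_mul_eq hz h1 hw (mul_div_cancel₀ z (by exact_mod_cast hr.ne')))
  rw [ofReal_image_Icc_eq_image_sphere]
  exact mem_image_of_mem _ (mem_sphere_zero_iff_norm.mpr hw)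

end Complex

/-- For `λ_k = z_k + z_k⁻¹` with `z_k` in the unit disk, the Blaschke-type
condition on `λ_k` relative to `[-2,2]` is equivalent to `Σ (1 − |z_k|) < ∞`. -/
theorem stmt_17 (z : ℕ → ℂ) (hz : ∀ k, z k ∈ ball (0:ℂ) 1) (hz0 : ∀ k, z k ≠ 0) :
    Summable (fun k : ℕ =>
      Metric.infDist (z k + (z k)⁻¹) (Complex.ofReal '' Icc (-2:ℝ) 2) /
        Real.sqrt ‖(z k + (z k)⁻¹) ^ 2 - 4‖) ↔
    Summable (fun k : ℕ => 1 - ‖z k‖) := by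
  have hz1 k : ‖z k‖ < 1 := mem_ball_zero_iff.mp (hz k)
  constructor
  · intro h
    exact (h.mul_left 2).of_nonneg_of_le (fun k => by linarith [hz1 k])
      fun k => Complex.one_sub_norm_le_two_mul_infDist_div (hz0 k) (hz1 k)
  · intro h
    exact (h.mul_left 2).of_nonneg_of_le (fun k => div_nonneg infDist_nonneg (Real.sqrt_nonneg _))
      fun k => Complex.infDist_div_le_two_mul_one_sub_norm (hz0 k) (hz1 k)
end
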